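/- arXiv:1401.1541 — 5 statements merged into one kernel-verified Lean document; each statement's English description precedes it below -/
import Mathlib

section
/- For any circle graph G with connected components G_1, ..., G_r, the polygon number satisfies ψ(G) = (Σ_{i=1}^r ψ(G_i)) − 2(r−1). -/
open SimpleGraph

/-- The circle on which chord diagrams live (the unit circle as an additive circle). -/
abbrev Circ : Type := AddCircle (1 : ℝ)

/-- A circle representation of a graph `G`: each vertex `v` gets a chord with
distinct endpoints `p v` and `q v`, all `2|V|` endpoints are distinct, and two
distinct vertices are adjacent iff their chords cross (i.e. exactly one endpoint
of one chord lies strictly inside an arc determined by the other chord). -/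
structure CircleRep (V : Type) (G : SimpleGraph V) where
  p : V → Circ
  q : V → Circ
  inj : Function.Injective (Sum.elim p q)
  adj : ∀ u v : V, G.Adj u v ↔ u ≠ v ∧
    Xor' (sbtw (p v) (p u) (q v)) (sbtw (p v) (q u) (q v))

namespace CircleRep

variable {V : Type} {G : SimpleGraph V} (R : CircleRep V G)

/-- The two open arcs of the chord of `v`: `b = true` is the arc from `p v`
clockwise to `q v`, `b = false` is the other arc. -/
def ArcSet (v : V) (b : Bool) : Set Circ :=
  if b then {x | sbtw (R.p v) x (R.q v)} else {x | sbtw (R.q v) x (R.p v)}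

/-- The arc `b` of the chord of `v` is empty: it contains both endpoints of no chord. -/
def ArcEmpty (v : V) (b : Bool) : Prop :=
  ∀ u : V, ¬ (R.p u ∈ R.ArcSet v b ∧ R.q u ∈ R.ArcSet v b)

/-- A chord is peripheral if one of its arcs is empty. -/
def Peripheral (v : V) : Prop := ∃ b : Bool, R.ArcEmpty v b

/-- A set `T` of corner points satisfies the chord of `v` if each of the two
arcs of the chord contains a corner. -/
def SatChord (T : Finset Circ) (v : V) : Prop :=
  (∃ t ∈ T, t ∈ R.ArcSet v true) ∧ (∃ t ∈ T, t ∈ R.ArcSet v false)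

/-- `T` is a satisfying set of corners: the corners are distinct from all chord
endpoints and every chord has a corner in each of its arcs. -/
def GoodCorners (T : Finset Circ) : Prop :=
  (∀ t ∈ T, ∀ v : V, t ≠ R.p v ∧ t ≠ R.q v) ∧ ∀ v : V, R.SatChord T v

/-- The polygon number `ψ_r` of a circle representation: the minimum number of
corners that must be added to satisfy all chords. -/
noncomputable def polyNum : ℕ :=
  sInf {k | ∃ T : Finset Circ, T.card = k ∧ R.GoodCorners T}

/-- `c 0, …, c (ℓ-1)` is an ℓ-independent set in series: there is a point `x`
on the circle such that a clockwise traversal starting at `x` encounters both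
endpoints of `c i` before both endpoints of `c j` whenever `i < j`. -/
def SeriesIndep {ℓ : ℕ} (c : Fin ℓ → V) : Prop :=
  Function.Injective c ∧ ∃ x : Circ,
    (∀ i : Fin ℓ, x ≠ R.p (c i) ∧ x ≠ R.q (c i)) ∧
    ∀ i j : Fin ℓ, i < j →
      ∀ e ∈ ({R.p (c i), R.q (c i)} : Set Circ),
        ∀ f ∈ ({R.p (c j), R.q (c j)} : Set Circ), sbtw x e f

end CircleRep

/-- The polygon number `ψ(G)`: the minimum `k` such that `G` has a circle
representation together with `k` corners satisfying all chords. -/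
noncomputable def polygonNumber {V : Type} (G : SimpleGraph V) : ℕ :=
  sInf {k | ∃ R : CircleRep V G, ∃ T : Finset Circ, T.card = k ∧ R.GoodCorners T}

/-- A permutation graph: a graph having a circle representation admitting two
corner points such that each chord has one corner in each of its arcs. -/
def IsPermutationGraph {V : Type} (G : SimpleGraph V) : Prop :=
  ∃ R : CircleRep V G, ∃ T : Finset Circ, T.card = 2 ∧ R.GoodCorners T

/-- The clique cover number `κ(G)`: least `n` such that the vertex set can be
partitioned into `n` cliques. -/
noncomputable def cliqueCoverNumber {V : Type} (G : SimpleGraph V) : ℕ :=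
  sInf {n | ∃ f : V → Fin n, ∀ u v : V, f u = f v → u = v ∨ G.Adj u v}

/-- The independence number `α(G)`. -/
noncomputable def indepNumber {V : Type} (G : SimpleGraph V) : ℕ :=
  sSup {n | ∃ s : Finset V, (∀ u ∈ s, ∀ v ∈ s, u ≠ v → ¬ G.Adj u v) ∧ s.card = n}

/-- `A` is an asteroidal set of `G`: for every `a ∈ A`, any two vertices of
`A \ {a}` are connected by a path in `G - N[a]`. -/
def IsAsteroidal {V : Type} (G : SimpleGraph V) (A : Set V) : Prop :=
  ∀ a ∈ A, ∀ x ∈ A, ∀ y ∈ A, x ≠ a → y ≠ a →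
    ∃ (hx : x ∈ {w | w ≠ a ∧ ¬ G.Adj a w}) (hy : y ∈ {w | w ≠ a ∧ ¬ G.Adj a w}),
      (G.induce {w | w ≠ a ∧ ¬ G.Adj a w}).Reachable ⟨x, hx⟩ ⟨y, hy⟩

/-- The asteroidal number `an(G)`: maximum size of an asteroidal set. -/
noncomputable def asteroidalNumber {V : Type} (G : SimpleGraph V) : ℕ :=
  sSup {n | ∃ A : Finset V, IsAsteroidal G ↑A ∧ A.card = n}

/-- `G` is AT-free: it has no asteroidal triple. -/
def ATFree {V : Type} (G : SimpleGraph V) : Prop :=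
  ¬ ∃ a b c : V, a ≠ b ∧ a ≠ c ∧ b ≠ c ∧ IsAsteroidal G {a, b, c}

/-- `G` is distance hereditary: in every connected induced subgraph, distances
agree with those of `G`. -/
def DistanceHereditary {V : Type} (G : SimpleGraph V) : Prop :=
  ∀ s : Set V, (G.induce s).Connected →
    ∀ u v : ↥s, (G.induce s).dist u v = G.dist (u : V) (v : V)

/-- `{V1, V2}` is a split of `G`. -/
def IsSplit {V : Type} (G : SimpleGraph V) (V1 V2 : Set V) : Prop :=
  V1 ∪ V2 = Set.univ ∧ Disjoint V1 V2 ∧ 1 < V1.ncard ∧ 1 < V2.ncard ∧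
    ∀ x ∈ V1, ∀ y ∈ V2,
      (G.Adj x y ↔ (∃ y' ∈ V2, G.Adj x y') ∧ (∃ x' ∈ V1, G.Adj x' y))


/-!
Lower bound. Take a representation of `G` with `ψ(G)` corners, cut the circle at a point off
the chords and read everything in real coordinates. The chord intervals of a component cover
its span, and since chords of different components never cross, a chord end of another
component inside that span forces the whole other component strictly inside one chord interval.
Hence a component `C` of least span has no foreign chord ends inside its span: the corners in
the span together with the cut point satisfy `C`, and the corners outside together with one
point of the span satisfy all other components. Induction on the number `r` of components gives
`∑ ψ(Gᵢ) + 2 ≤ ψ(G) + 2r`.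

Upper bound. Cut an optimal representation of each `Gᵢ` open at two of its corners and squeeze
it into `±[aᵢ, 2aᵢ]`, with scales `aᵢ` decreasing by factors of four. The components are then
nested without crossings, and the two cut corners of every component can be replaced by the two
common points `0` and `-1/2`, so `ψ(G) ≤ ∑ ψ(Gᵢ) - 2(r - 1)`.
-/

/-! ### Cyclic order in real coordinates -/

namespace Circ

noncomputable def lift (w : ℝ) (z : Circ) : ℝ := AddCircle.equivIco 1 w z

theorem lift_mem (w : ℝ) (z : Circ) : lift w z ∈ Set.Ico w (w + 1) :=
  (AddCircle.equivIco 1 w z).2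

@[simp]
theorem coe_lift (w : ℝ) (z : Circ) : ((lift w z : ℝ) : Circ) = z :=
  (AddCircle.equivIco 1 w).symm_apply_apply z

theorem lift_injective (w : ℝ) : Function.Injective (lift w) := fun z z' h => by
  rw [← coe_lift w z, ← coe_lift w z', h]

theorem lift_coe {w x : ℝ} (hx : x ∈ Set.Ico w (w + 1)) : lift w (x : Circ) = x :=
  (AddCircle.coe_eq_coe_iff_of_mem_Ico (lift_mem w _) hx).1 (coe_lift w _)

theorem lift_lift_zero_self (u : Circ) : lift (lift 0 u) u = lift 0 u := by
  have := lift_coe (w := lift 0 u) ⟨le_rfl, lt_add_one _⟩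
  rwa [coe_lift] at this

end Circ

def Cyc (x y z : ℝ) : Prop := (x < y ∧ y < z) ∨ (y < z ∧ z < x) ∨ (z < x ∧ x < y)

namespace Cyc

variable {a b t t' x y z α β : ℝ}

theorem iff_of_lt (h : a < b) : Cyc a t b ↔ t ∈ Set.Ioo a b := by
  unfold Cyc
  constructor
  · rintro (⟨h1, h2⟩ | ⟨h1, h2⟩ | ⟨h1, h2⟩) <;> constructor <;> linarith
  · exact Or.inl

theorem iff_of_gt (h : b < a) : Cyc a t b ↔ t < b ∨ a < t := by
  unfold Cyc
  constructor
  · rintro (⟨h1, h2⟩ | ⟨h1, h2⟩ | ⟨h1, h2⟩)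
    · exact absurd (h1.trans h2) h.not_gt
    · exact Or.inl h1
    · exact Or.inr h2
  · rintro (h1 | h1)
    · exact Or.inr (Or.inl ⟨h1, h⟩)
    · exact Or.inr (Or.inr ⟨h, h1⟩)

theorem or_cyc_swap (hxy : x ≠ y) (hyz : y ≠ z) (hxz : x ≠ z) : Cyc x y z ∨ Cyc x z y := by
  unfold Cyc
  rcases lt_or_gt_of_ne hxy with h | h <;> rcases lt_or_gt_of_ne hyz with h' | h' <;>
    rcases lt_or_gt_of_ne hxz with h'' | h'' <;> tauto

theorem comp_strictMono {f : ℝ → ℝ} (hf : StrictMono f) :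
    Cyc (f x) (f y) (f z) ↔ Cyc x y z := by
  simp only [Cyc, hf.lt_iff_lt]

theorem iff_mem_Ioo_iff (hab : a ≠ b) (hta : t ≠ a) (htb : t ≠ b) :
    Cyc a t b ↔ (t ∈ Set.Ioo (min a b) (max a b) ↔ a < b) := by
  rcases lt_or_gt_of_ne hab with h | h
  · simp [iff_of_lt h, h, h.le]
  · rw [iff_of_gt h, min_eq_right h.le, max_eq_left h.le, iff_false_intro h.asymm, iff_false,
      Set.mem_Ioo, not_and_or, not_lt, not_lt, le_iff_lt_or_eq, le_iff_lt_or_eq]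
    tauto

theorem congr_of_mem_Ioo (ha : a ∉ Set.Ioo α β) (hb : b ∉ Set.Ioo α β)
    (ht : t ∈ Set.Ioo α β) (ht' : t' ∈ Set.Ioo α β) : Cyc a t b ↔ Cyc a t' b := by
  simp only [Set.mem_Ioo, not_and_or, not_lt] at ha hb ht ht'
  unfold Cyc
  rcases ha with ha | ha <;> rcases hb with hb | hb <;>
    constructor <;> rintro (⟨h1, h2⟩ | ⟨h1, h2⟩ | ⟨h1, h2⟩) <;>
    first
    | (left; constructor <;> linarith)
    | (right; left; constructor <;> linarith)
    | (right; right; constructor <;> linarith)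

theorem congr_of_notMem_Icc (ha : a ∈ Set.Icc α β) (hb : b ∈ Set.Icc α β)
    (ht : t ∉ Set.Icc α β) (ht' : t' ∉ Set.Icc α β) : Cyc a t b ↔ Cyc a t' b := by
  simp only [Set.mem_Icc, not_and_or, not_le] at ha hb ht ht'
  unfold Cyc
  rcases ht with ht | ht <;> rcases ht' with ht' | ht' <;>
    constructor <;> rintro (⟨h1, h2⟩ | ⟨h1, h2⟩ | ⟨h1, h2⟩) <;>
    first
    | (left; constructor <;> linarith)
    | (right; left; constructor <;> linarith)
    | (right; right; constructor <;> linarith)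

theorem mem_Ioo_or_cyc {w : ℝ} (ha : a ∈ Set.Icc α β) (hb : b ∈ Set.Icc α β) (hwb : w < b)
    (h : Cyc a t b) : t ∈ Set.Ioo α β ∨ Cyc a w b := by
  rcases h with ⟨h1, h2⟩ | ⟨-, h2⟩ | ⟨h1, -⟩
  · exact Or.inl ⟨ha.1.trans_lt h1, h2.trans_le hb.2⟩
  · exact Or.inr (Or.inr (Or.inl ⟨hwb, h2⟩))
  · exact Or.inr (Or.inr (Or.inl ⟨hwb, h1⟩))

theorem zero_or_lt {s : ℝ} (ha : 0 < a) (hx : -2 * a ≤ x) (hxa : a ≤ |x|)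
    (hs : s = a ∨ s = -2 * a) (h : Cyc x s z) : Cyc x 0 z ∨ z < x := by
  rcases h with ⟨h1, h2⟩ | ⟨-, h2⟩ | ⟨h1, -⟩
  · rcases hs with rfl | rfl
    · have hx0 : x < 0 := by
        by_contra hx0
        rw [abs_of_nonneg (not_lt.1 hx0)] at hxa
        linarith
      exact Or.inl (Or.inl ⟨hx0, by linarith⟩)
    · linarith
  · exact Or.inr h2
  · exact Or.inr h1

end Cyc

theorem mem_Ioo_congr {m M t t' α β : ℝ} (hm : m ∉ Set.Ioo α β) (hM : M ∉ Set.Ioo α β)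
    (ht : t ∈ Set.Ioo α β) (ht' : t' ∈ Set.Ioo α β) :
    t ∈ Set.Ioo m M ↔ t' ∈ Set.Ioo m M := by
  simp only [Set.mem_Ioo, not_and_or, not_lt] at hm hM ht ht' ⊢
  rcases hm with hm | hm <;> rcases hM with hM | hM <;> constructor <;> rintro ⟨h1, h2⟩ <;>
    constructor <;> linarith

theorem sbtw_coe_of_lt {x y z : ℝ} (h1 : x < y) (h2 : y < z) (h3 : z < x + 1) :
    sbtw (x : Circ) (y : Circ) (z : Circ) := by
  have hy : toIcoMod one_pos z y = y + 1 :=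
    (toIcoMod_eq_iff _).2 ⟨⟨by linarith, by linarith⟩, -1, by simp⟩
  have hx : toIocMod one_pos z x = x + 1 :=
    (toIocMod_eq_iff _).2 ⟨⟨by linarith, by linarith⟩, -1, by simp⟩
  rw [sbtw_iff_btw_not_btw, QuotientAddGroup.btw_coe_iff, QuotientAddGroup.btw_coe_iff,
    (toIcoMod_eq_self _).2 ⟨h1.le, h2.trans h3⟩,
    (toIocMod_eq_self _).2 ⟨h1.trans h2, h3.le⟩, hy, hx]
  constructor <;> linarith

theorem sbtw_coe_iff_cyc {w x y z : ℝ} (hx : x ∈ Set.Ico w (w + 1))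
    (hy : y ∈ Set.Ico w (w + 1)) (hz : z ∈ Set.Ico w (w + 1)) :
    sbtw (x : Circ) (y : Circ) (z : Circ) ↔ Cyc x y z := by
  have of_cyc : ∀ {x y z : ℝ}, x ∈ Set.Ico w (w + 1) → y ∈ Set.Ico w (w + 1) →
      z ∈ Set.Ico w (w + 1) → Cyc x y z → sbtw (x : Circ) (y : Circ) (z : Circ) := by
    rintro x y z ⟨hx1, hx2⟩ ⟨hy1, hy2⟩ ⟨hz1, hz2⟩
      (⟨h1, h2⟩ | ⟨h1, h2⟩ | ⟨h1, h2⟩)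
    · exact sbtw_coe_of_lt h1 h2 (by linarith)
    · exact (sbtw_coe_of_lt h1 h2 (by linarith)).cyclic_right
    · exact (sbtw_coe_of_lt h1 h2 (by linarith)).cyclic_left
  refine ⟨fun h => ?_, of_cyc hx hy hz⟩
  have hxy : x ≠ y := by rintro rfl; exact sbtw_irrefl_left h
  have hyz : y ≠ z := by rintro rfl; exact sbtw_irrefl_right h
  have hxz : x ≠ z := by rintro rfl; exact sbtw_irrefl_left_right h
  exact (Cyc.or_cyc_swap hxy hyz hxz).resolve_right
    fun hc => h.not_sbtw (of_cyc hx hz hy hc).cyclic_left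

theorem Circ.sbtw_iff_cyc_lift (w : ℝ) (x y z : Circ) :
    sbtw x y z ↔ Cyc (lift w x) (lift w y) (lift w z) := by
  conv_lhs => rw [← coe_lift w x, ← coe_lift w y, ← coe_lift w z]
  exact sbtw_coe_iff_cyc (lift_mem w x) (lift_mem w y) (lift_mem w z)

namespace CircleRep

variable {V : Type} {G : SimpleGraph V} (R : CircleRep V G)

theorem p_ne_q (u v : V) : R.p u ≠ R.q v := fun h => Sum.inl_ne_inr (R.inj h)

theorem p_injective : Function.Injective R.p := fun _ _ h => Sum.inl_injective (R.inj h)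

theorem q_injective : Function.Injective R.q := fun _ _ h => Sum.inr_injective (R.inj h)

theorem satChord_iff {T : Finset Circ} {v : V} : R.SatChord T v ↔
    (∃ t ∈ T, sbtw (R.p v) t (R.q v)) ∧ ∃ t ∈ T, sbtw (R.q v) t (R.p v) :=
  Iff.rfl

theorem one_lt_card_of_satChord {T : Finset Circ} {v : V} (h : R.SatChord T v) : 1 < T.card := by
  obtain ⟨⟨t, ht, htv⟩, ⟨t', ht', ht'v⟩⟩ := R.satChord_iff.1 h
  exact Finset.one_lt_card.2 ⟨t, ht, t', ht', by rintro rfl; exact htv.not_sbtw ht'v⟩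

def NotEndpoint (z : Circ) : Prop := ∀ v : V, z ≠ R.p v ∧ z ≠ R.q v

theorem exists_notEndpoint_coe_mem_Ioo [Finite V] {a b : ℝ} (hab : a < b) (hb : b ≤ a + 1) :
    ∃ t ∈ Set.Ioo a b, R.NotEndpoint t := by
  have hinj : Set.InjOn ((↑) : ℝ → Circ) (Set.Ioo a b) := fun x hx y hy h =>
    (AddCircle.coe_eq_coe_iff_of_mem_Ico ⟨hx.1.le, hx.2.trans_le hb⟩
      ⟨hy.1.le, hy.2.trans_le hb⟩).1 h
  obtain ⟨_, ⟨t, ht, rfl⟩, hE⟩ := ((Set.Ioo_infinite hab).image hinj).exists_notMem_finite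
    ((Set.finite_range R.p).union (Set.finite_range R.q))
  exact ⟨t, ht, fun v =>
    ⟨fun h => hE (Or.inl ⟨v, h.symm⟩), fun h => hE (Or.inr ⟨v, h.symm⟩)⟩⟩

theorem exists_notEndpoint_sbtw [Finite V] {x y : Circ} (hxy : x ≠ y) :
    ∃ t, R.NotEndpoint t ∧ sbtw x t y := by
  set a := Circ.lift 0 x
  set b := Circ.lift a y
  have hab : a < b := (Circ.lift_mem a y).1.lt_of_ne fun h => hxy (by
    rw [← Circ.coe_lift 0 x, ← Circ.coe_lift a y]; exact congrArg _ h)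
  obtain ⟨t, ht, htR⟩ := R.exists_notEndpoint_coe_mem_Ioo hab (Circ.lift_mem a y).2.le
  refine ⟨t, htR, ?_⟩
  rw [← Circ.coe_lift 0 x, ← Circ.coe_lift a y]
  exact sbtw_coe_of_lt ht.1 ht.2 (Circ.lift_mem a y).2

theorem exists_goodCorners [Finite V] : ∃ T : Finset Circ, R.GoodCorners T := by
  classical
  have := Fintype.ofFinite V
  choose t ht htp using fun v => R.exists_notEndpoint_sbtw (R.p_ne_q v v)
  choose t' ht' ht'q using fun v => R.exists_notEndpoint_sbtw (R.p_ne_q v v).symm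
  refine ⟨Finset.univ.image t ∪ Finset.univ.image t', ?_, fun v => ⟨?_, ?_⟩⟩
  · intro s hs
    simp only [Finset.mem_union, Finset.mem_image, Finset.mem_univ, true_and] at hs
    rcases hs with ⟨v, rfl⟩ | ⟨v, rfl⟩
    exacts [ht v, ht' v]
  · exact ⟨t v, by simp, htp v⟩
  · exact ⟨t' v, by simp, ht'q v⟩

def restrict (s : Set V) : CircleRep s (G.induce s) where
  p v := R.p v
  q v := R.q v
  inj := by
    rw [show Sum.elim (fun v : s => R.p v) (fun v : s => R.q v) =
      Sum.elim R.p R.q ∘ Sum.map Subtype.val Subtype.val by ext (_ | _) <;> rfl]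
    exact R.inj.comp (Sum.map_injective.2 ⟨Subtype.val_injective, Subtype.val_injective⟩)
  adj u v := by simpa [Subtype.ext_iff] using R.adj u v

theorem satChord_restrict {s : Set V} {T : Finset Circ} {v : s} :
    (R.restrict s).SatChord T v ↔ R.SatChord T v :=
  Iff.rfl

end CircleRep

theorem polygonNumber_le_card {V : Type} {G : SimpleGraph V} (R : CircleRep V G)
    {T : Finset Circ} (h : R.GoodCorners T) : polygonNumber G ≤ T.card :=
  Nat.sInf_le ⟨R, T, rfl, h⟩

theorem CircleRep.polygonNumber_induce_le_card {V : Type} {G : SimpleGraph V}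
    (R : CircleRep V G) {T : Finset Circ} (hT : ∀ t ∈ T, R.NotEndpoint t) {s : Set V}
    (hsat : ∀ v ∈ s, R.SatChord T v) : polygonNumber (G.induce s) ≤ T.card :=
  polygonNumber_le_card (R.restrict s) ⟨fun t ht v => hT t ht v, fun v => hsat v v.2⟩

theorem exists_goodCorners_card_eq_polygonNumber {V : Type} [Finite V] {G : SimpleGraph V}
    (h : Nonempty (CircleRep V G)) :
    ∃ R : CircleRep V G, ∃ T : Finset Circ, T.card = polygonNumber G ∧ R.GoodCorners T := by
  obtain ⟨R⟩ := h
  obtain ⟨T, hT⟩ := R.exists_goodCorners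
  exact Nat.sInf_mem (s := {k | ∃ R : CircleRep V G, ∃ T : Finset Circ, T.card = k ∧
    R.GoodCorners T}) ⟨T.card, R, T, rfl, hT⟩

theorem polygonNumber_eq_zero_of_isEmpty {V : Type} [IsEmpty V] {G : SimpleGraph V}
    (h : Nonempty (CircleRep V G)) : polygonNumber G = 0 := by
  obtain ⟨R⟩ := h
  have hT : R.GoodCorners ∅ := And.intro (by simp) isEmptyElim
  exact Nat.le_zero.1 (polygonNumber_le_card R hT)

/-! ### Lower bound -/

namespace CircleRep

variable {V : Type} {G : SimpleGraph V} (R : CircleRep V G) (w : ℝ)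

noncomputable def lp (v : V) : ℝ := Circ.lift w (R.p v)

noncomputable def lq (v : V) : ℝ := Circ.lift w (R.q v)

noncomputable def lo (v : V) : ℝ := min (R.lp w v) (R.lq w v)

noncomputable def hi (v : V) : ℝ := max (R.lp w v) (R.lq w v)

def chordIoo (v : V) : Set ℝ := Set.Ioo (R.lo w v) (R.hi w v)

def ends (v : V) : Set ℝ := {R.lp w v, R.lq w v}

variable {R w}

theorem lp_ne_lq (u v : V) : R.lp w u ≠ R.lq w v := fun h =>
  R.p_ne_q u v (Circ.lift_injective w h)

theorem lp_injective : Function.Injective (R.lp w) := fun _ _ h =>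
  R.p_injective (Circ.lift_injective w h)

theorem lq_injective : Function.Injective (R.lq w) := fun _ _ h =>
  R.q_injective (Circ.lift_injective w h)

theorem lo_lt_hi (v : V) : R.lo w v < R.hi w v := min_lt_max.2 (lp_ne_lq v v)

theorem lo_mem_ends (v : V) : R.lo w v ∈ R.ends w v := by
  rcases min_choice (R.lp w v) (R.lq w v) with h | h <;> simp [lo, ends, h]

theorem hi_mem_ends (v : V) : R.hi w v ∈ R.ends w v := by
  rcases max_choice (R.lp w v) (R.lq w v) with h | h <;> simp [hi, ends, h]

theorem ends_subset_Icc (v : V) : R.ends w v ⊆ Set.Icc (R.lo w v) (R.hi w v) := by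
  rintro θ (rfl | rfl)
  exacts [⟨min_le_left _ _, le_max_left _ _⟩, ⟨min_le_right _ _, le_max_right _ _⟩]

theorem ends_subset_Ico (v : V) : R.ends w v ⊆ Set.Ico w (w + 1) := by
  rintro θ (rfl | rfl) <;> exact Circ.lift_mem _ _

theorem ne_of_mem_ends {u v : V} (huv : u ≠ v) {θ θ' : ℝ} (hθ : θ ∈ R.ends w u)
    (hθ' : θ' ∈ R.ends w v) : θ ≠ θ' := by
  rcases hθ with rfl | rfl <;> rcases hθ' with rfl | rfl
  exacts [fun h => huv (lp_injective h), lp_ne_lq u v, (lp_ne_lq v u).symm,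
    fun h => huv (lq_injective h)]

variable (R w) in
theorem adj_iff_xor {u v : V} : G.Adj u v ↔
    u ≠ v ∧ Xor (R.lp w u ∈ R.chordIoo w v) (R.lq w u ∈ R.chordIoo w v) := by
  rw [R.adj]
  refine and_congr_right fun huv => ?_
  rw [Circ.sbtw_iff_cyc_lift w, Circ.sbtw_iff_cyc_lift w]
  change Xor (Cyc (R.lp w v) (R.lp w u) (R.lq w v)) (Cyc (R.lp w v) (R.lq w u) (R.lq w v)) ↔ _
  rw [Cyc.iff_mem_Ioo_iff (lp_ne_lq v v) (fun h => huv (lp_injective h)) (lp_ne_lq u v),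
    Cyc.iff_mem_Ioo_iff (lp_ne_lq v v) (lp_ne_lq v u).symm fun h => huv (lq_injective h)]
  unfold Xor chordIoo
  tauto

theorem lp_mem_chordIoo_iff_lq_mem {u v : V} (h : ¬G.Reachable u v) :
    R.lp w u ∈ R.chordIoo w v ↔ R.lq w u ∈ R.chordIoo w v := by
  have huv : u ≠ v := by rintro rfl; exact h (.refl _)
  have hadj : ¬G.Adj u v := fun h' => h h'.reachable
  rw [R.adj_iff_xor w] at hadj
  unfold Xor at hadj
  tauto

theorem lo_lt_hi_of_adj {u v : V} (h : G.Adj u v) : R.lo w v < R.hi w u := by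
  obtain ⟨-, h⟩ := (R.adj_iff_xor w).1 h
  obtain ⟨θ, hθ, hθv⟩ : ∃ θ ∈ R.ends w u, θ ∈ R.chordIoo w v := by
    rcases h with ⟨h, -⟩ | ⟨h, -⟩
    exacts [⟨_, Or.inl rfl, h⟩, ⟨_, Or.inr rfl, h⟩]
  exact hθv.1.trans_le (ends_subset_Icc u hθ).2

theorem exists_reachable_mem_Icc {y z : V} (hyz : G.Reachable y z) {γ : ℝ}
    (hy : R.lo w y ≤ γ) (hz : γ ≤ R.hi w z) :
    ∃ v, G.Reachable y v ∧ γ ∈ Set.Icc (R.lo w v) (R.hi w v) := by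
  obtain ⟨p⟩ := hyz
  induction p with
  | nil => exact ⟨_, .refl _, hy, hz⟩
  | @cons y y' z h p ih =>
    rcases le_or_gt γ (R.hi w y) with hγ | hγ
    · exact ⟨y, .refl _, hy, hγ⟩
    · obtain ⟨v, hv, hγv⟩ := ih (lo_lt_hi_of_adj h |>.trans hγ).le hz
      exact ⟨v, h.reachable.trans hv, hγv⟩

theorem lp_mem_chordIoo_of_adj {x y z : V} (hyz : G.Adj y z) (hyx : ¬G.Reachable y x)
    (h : R.lp w y ∈ R.chordIoo w x) : R.lp w z ∈ R.chordIoo w x := by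
  have hzx : ¬G.Reachable z x := fun h' => hyx (hyz.reachable.trans h')
  by_contra hc
  have hends : ∀ θ ∈ R.ends w z, θ ∉ R.chordIoo w x := by
    rintro θ (rfl | rfl)
    exacts [hc, mt (lp_mem_chordIoo_iff_lq_mem hzx).2 hc]
  have hside := mem_Ioo_congr (hends _ (lo_mem_ends z)) (hends _ (hi_mem_ends z)) h
    ((lp_mem_chordIoo_iff_lq_mem hyx).1 h)
  obtain ⟨-, hxor⟩ := (R.adj_iff_xor w).1 hyz
  unfold Xor chordIoo at hxor
  tauto

theorem lp_mem_chordIoo_iff_of_reachable {x y z : V} (hyz : G.Reachable y z)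
    (hyx : ¬G.Reachable y x) : R.lp w y ∈ R.chordIoo w x ↔ R.lp w z ∈ R.chordIoo w x := by
  obtain ⟨p⟩ := hyz
  induction p with
  | nil => rfl
  | @cons y y' z h p ih =>
    have hy'x : ¬G.Reachable y' x := fun h' => hyx (h.reachable.trans h')
    exact (Iff.intro (lp_mem_chordIoo_of_adj h hyx) (lp_mem_chordIoo_of_adj h.symm hy'x)).trans
      (ih hy'x)

theorem ends_subset_chordIoo {x y z : V} (hyz : G.Reachable y z) (hyx : ¬G.Reachable y x)
    {θ : ℝ} (hθ : θ ∈ R.ends w y) (hθx : θ ∈ R.chordIoo w x) :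
    R.ends w z ⊆ R.chordIoo w x := by
  have hy : R.lp w y ∈ R.chordIoo w x := by
    rcases hθ with rfl | rfl
    exacts [hθx, (lp_mem_chordIoo_iff_lq_mem hyx).2 hθx]
  have hz := (lp_mem_chordIoo_iff_of_reachable hyz hyx).1 hy
  rintro θ' (rfl | rfl)
  exacts [hz, (lp_mem_chordIoo_iff_lq_mem fun h => hyx (hyz.trans h)).1 hz]

theorem satChord_iff_cyc {T : Finset Circ} {v : V} : R.SatChord T v ↔
    (∃ t ∈ T, Cyc (R.lp w v) (Circ.lift w t) (R.lq w v)) ∧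
      ∃ t ∈ T, Cyc (R.lq w v) (Circ.lift w t) (R.lp w v) := by
  simp only [satChord_iff, Circ.sbtw_iff_cyc_lift w]
  rfl

theorem SatChord.mono_of_cyc {T T' : Finset Circ} {v : V}
    (h : ∀ A ∈ R.ends w v, ∀ B ∈ R.ends w v, ∀ t ∈ T, Cyc A (Circ.lift w t) B →
      ∃ t' ∈ T', Cyc A (Circ.lift w t') B) (hT : R.SatChord T v) : R.SatChord T' v := by
  obtain ⟨⟨t, ht, h1⟩, ⟨t', ht', h2⟩⟩ := satChord_iff_cyc.1 hT
  exact satChord_iff_cyc.2 ⟨h _ (Or.inl rfl) _ (Or.inr rfl) t ht h1,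
    h _ (Or.inr rfl) _ (Or.inl rfl) t' ht' h2⟩

theorem lt_of_mem_ends (hw : R.NotEndpoint w) {v : V} {θ : ℝ} (hθ : θ ∈ R.ends w v) :
    w < θ := by
  refine (ends_subset_Ico v hθ).1.lt_of_ne ?_
  rintro rfl
  rcases hθ with h | h
  · exact (hw v).1 (by rw [h, lp, Circ.coe_lift])
  · exact (hw v).2 (by rw [h, lq, Circ.coe_lift])

/-- An interval containing no end of `v` lies in one arc of `v`, so the corners in it can be
traded for any single point of it. -/
theorem SatChord.insert_filter {T : Finset Circ} {v : V} {α β s : ℝ} (hs : s ∈ Set.Ioo α β)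
    (hsw : s ∈ Set.Ico w (w + 1)) (hv : ∀ θ ∈ R.ends w v, θ ∉ Set.Ioo α β)
    (h : R.SatChord T v) :
    R.SatChord (insert (s : Circ) (T.filter fun t => Circ.lift w t ∉ Set.Ioo α β)) v := by
  classical
  refine SatChord.mono_of_cyc (w := w) (fun A hA B hB t ht hcyc => ?_) h
  by_cases hin : Circ.lift w t ∈ Set.Ioo α β
  · refine ⟨s, Finset.mem_insert_self _ _, ?_⟩
    rw [Circ.lift_coe hsw]
    exact (Cyc.congr_of_mem_Ioo (hv A hA) (hv B hB) hin hs).1 hcyc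
  · exact ⟨t, Finset.mem_insert_of_mem (Finset.mem_filter.2 ⟨ht, hin⟩), hcyc⟩

variable (R w)

noncomputable def spanLo (c : G.ConnectedComponent) : ℝ := ⨅ v : c.supp, R.lo w v

noncomputable def spanHi (c : G.ConnectedComponent) : ℝ := ⨆ v : c.supp, R.hi w v

variable {R w} [Finite V]

theorem spanLo_le {c : G.ConnectedComponent} {v : V} (hv : v ∈ c.supp) :
    R.spanLo w c ≤ R.lo w v :=
  ciInf_le (Finite.bddBelow_range _) (⟨v, hv⟩ : c.supp)

theorem le_spanHi {c : G.ConnectedComponent} {v : V} (hv : v ∈ c.supp) :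
    R.hi w v ≤ R.spanHi w c :=
  le_ciSup (f := fun v : c.supp => R.hi w v) (Finite.bddAbove_range _) ⟨v, hv⟩

variable (R w) in
theorem exists_lo_eq_spanLo (c : G.ConnectedComponent) :
    ∃ v ∈ c.supp, R.lo w v = R.spanLo w c := by
  have := c.nonempty_supp.to_subtype
  obtain ⟨⟨v, hv⟩, h⟩ := exists_eq_ciInf_of_finite (f := fun v : c.supp => R.lo w v)
  exact ⟨v, hv, h⟩

variable (R w) in
theorem exists_hi_eq_spanHi (c : G.ConnectedComponent) :
    ∃ v ∈ c.supp, R.hi w v = R.spanHi w c := by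
  have := c.nonempty_supp.to_subtype
  obtain ⟨⟨v, hv⟩, h⟩ := exists_eq_ciSup_of_finite (f := fun v : c.supp => R.hi w v)
  exact ⟨v, hv, h⟩

theorem ends_subset_Icc_span {c : G.ConnectedComponent} {v : V} (hv : v ∈ c.supp) :
    R.ends w v ⊆ Set.Icc (R.spanLo w c) (R.spanHi w c) := fun _ hθ =>
  ⟨(spanLo_le hv).trans (ends_subset_Icc v hθ).1,
    (ends_subset_Icc v hθ).2.trans (le_spanHi hv)⟩

theorem spanLo_lt_spanHi (c : G.ConnectedComponent) : R.spanLo w c < R.spanHi w c := by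
  obtain ⟨v, hv⟩ := c.nonempty_supp
  exact (spanLo_le hv).trans_lt ((lo_lt_hi v).trans_le (le_spanHi hv))

variable (R w) in
theorem span_subset_Ico (c : G.ConnectedComponent) :
    Set.Icc (R.spanLo w c) (R.spanHi w c) ⊆ Set.Ico w (w + 1) := by
  obtain ⟨y, -, hy⟩ := R.exists_lo_eq_spanLo w c
  obtain ⟨z, -, hz⟩ := R.exists_hi_eq_spanHi w c
  rintro γ ⟨h1, h2⟩
  rw [← hy] at h1; rw [← hz] at h2
  exact ⟨(ends_subset_Ico y (lo_mem_ends y)).1.trans h1,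
    h2.trans_lt (ends_subset_Ico z (hi_mem_ends z)).2⟩

theorem exists_mem_supp_mem_Icc {c : G.ConnectedComponent} {γ : ℝ}
    (hγ : γ ∈ Set.Icc (R.spanLo w c) (R.spanHi w c)) :
    ∃ x ∈ c.supp, γ ∈ Set.Icc (R.lo w x) (R.hi w x) := by
  obtain ⟨y, hy, hyγ⟩ := R.exists_lo_eq_spanLo w c
  obtain ⟨z, hz, hzγ⟩ := R.exists_hi_eq_spanHi w c
  rw [ConnectedComponent.mem_supp_iff] at hy hz
  obtain ⟨x, hyx, hx⟩ := exists_reachable_mem_Icc (ConnectedComponent.exact (hy.trans hz.symm))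
    (hyγ.trans_le hγ.1) (hγ.2.trans_eq hzγ.symm)
  exact ⟨x, (c.mem_supp_iff x).2 ((ConnectedComponent.sound hyx).symm.trans hy), hx⟩

theorem spanHi_sub_spanLo_lt {c : G.ConnectedComponent} {v : V} (hv : v ∉ c.supp) {θ : ℝ}
    (hθ : θ ∈ R.ends w v) (hθc : θ ∈ Set.Ioo (R.spanLo w c) (R.spanHi w c)) :
    R.spanHi w (G.connectedComponentMk v) - R.spanLo w (G.connectedComponentMk v) <
      R.spanHi w c - R.spanLo w c := by
  obtain ⟨x, hx, hθx⟩ := exists_mem_supp_mem_Icc (Set.Ioo_subset_Icc_self hθc)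
  have hxv : x ≠ v := by rintro rfl; exact hv hx
  have hθx' : θ ∈ R.chordIoo w x :=
    ⟨hθx.1.lt_of_ne (ne_of_mem_ends hxv (lo_mem_ends x) hθ),
      hθx.2.lt_of_ne (ne_of_mem_ends hxv (hi_mem_ends x) hθ).symm⟩
  have hvx : ¬G.Reachable v x := fun h => hv (by
    rw [ConnectedComponent.mem_supp_iff] at hx ⊢
    exact (ConnectedComponent.sound h).trans hx)
  have hnest : ∀ y ∈ (G.connectedComponentMk v).supp, R.ends w y ⊆ R.chordIoo w x :=
    fun y hy => ends_subset_chordIoo (ConnectedComponent.exact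
      ((ConnectedComponent.mem_supp_iff _ _).1 hy).symm) hvx hθ hθx'
  obtain ⟨y, hy, hyv⟩ := R.exists_lo_eq_spanLo w (G.connectedComponentMk v)
  obtain ⟨z, hz, hzv⟩ := R.exists_hi_eq_spanHi w (G.connectedComponentMk v)
  calc R.spanHi w (G.connectedComponentMk v) - R.spanLo w (G.connectedComponentMk v)
      = R.hi w z - R.lo w y := by rw [hyv, hzv]
    _ < R.hi w x - R.lo w x :=
      sub_lt_sub (hnest z hz (hi_mem_ends z)).2 (hnest y hy (lo_mem_ends y)).1
    _ ≤ R.spanHi w c - R.spanLo w c := sub_le_sub (le_spanHi hx) (spanLo_le hx)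

/-- Corners outside the span of `c` lie in the arcs of its chords containing the base point `w`,
so `w` can replace them all. -/
theorem polygonNumber_induce_le (hw : R.NotEndpoint w) {T : Finset Circ}
    (hT : ∀ t ∈ T, R.NotEndpoint t) {c : G.ConnectedComponent}
    (hsat : ∀ v ∈ c.supp, R.SatChord T v) :
    polygonNumber (G.induce c.supp) ≤
      (T.filter fun t => Circ.lift w t ∈ Set.Ioo (R.spanLo w c) (R.spanHi w c)).card + 1 := by
  classical
  refine (polygonNumber_le_card (R.restrict c.supp) (T := insert (w : Circ) (T.filter _))
    ⟨?_, ?_⟩).trans (Finset.card_insert_le _ _)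
  · intro t ht v
    rcases Finset.mem_insert.1 ht with rfl | ht
    exacts [hw v, hT t (Finset.mem_filter.1 ht).1 v]
  · rintro ⟨v, hv⟩
    refine R.satChord_restrict.2 (SatChord.mono_of_cyc (w := w) ?_ (hsat v hv))
    intro A hA B hB t ht hcyc
    rcases Cyc.mem_Ioo_or_cyc (ends_subset_Icc_span hv hA) (ends_subset_Icc_span hv hB)
      (lt_of_mem_ends hw hB) hcyc with h | h
    · exact ⟨t, Finset.mem_insert_of_mem (Finset.mem_filter.2 ⟨ht, h⟩), hcyc⟩
    · refine ⟨w, Finset.mem_insert_self _ _, ?_⟩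
      rwa [Circ.lift_coe ⟨le_rfl, lt_add_one w⟩]

/-- A component of least span (seen from a base point off the chords) has no chord end of
another component inside its span, so it can be split off at the cost of two corners. -/
theorem exists_peel {T : Finset Circ} (hT : ∀ t ∈ T, R.NotEndpoint t)
    {S : Finset G.ConnectedComponent} (hS : S.Nonempty)
    (hsat : ∀ v, G.connectedComponentMk v ∈ S → R.SatChord T v) :
    ∃ c ∈ S, ∃ T' : Finset Circ, (∀ t ∈ T', R.NotEndpoint t) ∧
      (∀ v, G.connectedComponentMk v ∈ S → G.connectedComponentMk v ≠ c →
        R.SatChord T' v) ∧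
      polygonNumber (G.induce c.supp) + T'.card ≤ T.card + 2 := by
  classical
  obtain ⟨w, -, hw⟩ := R.exists_notEndpoint_coe_mem_Ioo zero_lt_one (zero_add 1).ge
  obtain ⟨c, hcS, hmin⟩ := S.exists_min_image (fun c => R.spanHi w c - R.spanLo w c) hS
  have hforeign : ∀ v, G.connectedComponentMk v ∈ S → G.connectedComponentMk v ≠ c →
      ∀ θ ∈ R.ends w v, θ ∉ Set.Ioo (R.spanLo w c) (R.spanHi w c) :=
    fun v hvS hvc θ hθ hθc =>
      (spanHi_sub_spanLo_lt (mt (c.mem_supp_iff v).1 hvc) hθ hθc).not_ge (hmin _ hvS)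
  have hspan := R.span_subset_Ico w c
  obtain ⟨s, hs, hsR⟩ := R.exists_notEndpoint_coe_mem_Ioo (spanLo_lt_spanHi c)
    (by linarith [(hspan ⟨le_rfl, (spanLo_lt_spanHi c).le⟩).1,
      (hspan ⟨(spanLo_lt_spanHi c).le, le_rfl⟩).2])
  set J := Set.Ioo (R.spanLo w c) (R.spanHi w c)
  set Tout := T.filter fun t => Circ.lift w t ∉ J
  have hin : polygonNumber (G.induce c.supp) ≤ (T.filter fun t => Circ.lift w t ∈ J).card + 1 :=
    polygonNumber_induce_le hw hT fun v hv => hsat v (((c.mem_supp_iff v).1 hv).symm ▸ hcS)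
  have hsplit : (T.filter fun t => Circ.lift w t ∈ J).card + Tout.card = T.card :=
    Finset.card_filter_add_card_filter_not _
  refine ⟨c, hcS, insert (s : Circ) Tout, ?_, fun v hvS hvc => ?_, ?_⟩
  · intro t ht
    rcases Finset.mem_insert.1 ht with rfl | ht
    exacts [hsR, hT t (Finset.mem_filter.1 ht).1]
  · exact (hsat v hvS).insert_filter hs (hspan (Set.Ioo_subset_Icc_self hs)) (hforeign v hvS hvc)
  · have := Finset.card_insert_le (s : Circ) Tout
    omega

variable (R)

theorem sum_polygonNumber_add_two_le {T : Finset Circ} (hT : ∀ t ∈ T, R.NotEndpoint t)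
    {S : Finset G.ConnectedComponent} (hS : S.Nonempty)
    (hsat : ∀ v, G.connectedComponentMk v ∈ S → R.SatChord T v) :
    ∑ c ∈ S, polygonNumber (G.induce c.supp) + 2 ≤ T.card + 2 * S.card := by
  classical
  induction S using Finset.strongInduction generalizing T with
  | H S ih =>
    obtain ⟨c, hc, T', hT', hsat', hle⟩ := exists_peel hT hS hsat
    rw [← Finset.add_sum_erase S _ hc, ← Finset.card_erase_add_one hc]
    rcases (S.erase c).eq_empty_or_nonempty with he | hne
    · have := R.polygonNumber_induce_le_card hT fun v hv =>
        hsat v (((c.mem_supp_iff v).1 hv).symm ▸ hc)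
      rw [he, Finset.sum_empty, Finset.card_empty]
      omega
    · have := ih _ (Finset.erase_ssubset hc) hT' hne fun v hv =>
        hsat' v (Finset.mem_of_mem_erase hv) (Finset.ne_of_mem_erase hv)
      omega

end CircleRep

/-! ### Upper bound -/

/-- Increasing and piecewise affine, sending `[w, m)` onto `[-2a, -a)` and `[m, w + 1)` onto
`[a, 2a)`. -/
noncomputable def squeeze (w m a y : ℝ) : ℝ :=
  if y < m then a * ((y - w) / (m - w) - 2) else a * (1 + (y - m) / (w + 1 - m))

section squeeze

variable {w m a : ℝ}

theorem squeeze_strictMono (hwm : w < m) (hm : m < w + 1) (ha : 0 < a) :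
    StrictMono (squeeze w m a) := by
  intro y y' h
  have hd : 0 < m - w := by linarith
  have hd' : 0 < w + 1 - m := by linarith
  unfold squeeze
  split_ifs with h1 h2 h2
  · gcongr
  · have : (y - w) / (m - w) < 1 := (div_lt_one hd).2 (by linarith)
    have : 0 ≤ (y' - m) / (w + 1 - m) := div_nonneg (by linarith) hd'.le
    nlinarith
  · exact absurd (h.trans h2) h1
  · gcongr

theorem squeeze_mem (hwm : w < m) (hm : m < w + 1) (ha : 0 < a) {y : ℝ}
    (hy : y ∈ Set.Ico w (w + 1)) :
    squeeze w m a y ∈ Set.Ico (-2 * a) (2 * a) ∧ a ≤ |squeeze w m a y| := by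
  obtain ⟨hy1, hy2⟩ := hy
  unfold squeeze
  split_ifs with h
  · have h0 : 0 ≤ (y - w) / (m - w) := div_nonneg (by linarith) (by linarith)
    have h1 : (y - w) / (m - w) < 1 := (div_lt_one (by linarith)).2 (by linarith)
    rw [abs_of_neg (by nlinarith)]
    refine ⟨⟨by nlinarith, by nlinarith⟩, by nlinarith⟩
  · have h0 : 0 ≤ (y - m) / (w + 1 - m) := div_nonneg (by linarith) (by linarith)
    have h1 : (y - m) / (w + 1 - m) < 1 := (div_lt_one (by linarith)).2 (by linarith)
    rw [abs_of_pos (by nlinarith)]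
    refine ⟨⟨by nlinarith, by nlinarith⟩, by nlinarith⟩

theorem squeeze_self : squeeze w m a m = a := by
  simp [squeeze]

theorem squeeze_left (hwm : w < m) : squeeze w m a w = -2 * a := by
  rw [squeeze, if_pos hwm, sub_self, zero_div]
  ring

end squeeze

/-- The circle cut open at `u₂` and read in `[-2a, 2a)`, with `u₂ ↦ -2a` and `u₁ ↦ a`. -/
noncomputable def chart (a : ℝ) (u₁ u₂ z : Circ) : ℝ :=
  squeeze (Circ.lift 0 u₂) (Circ.lift (Circ.lift 0 u₂) u₁) a (Circ.lift (Circ.lift 0 u₂) z)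

section chart

variable {a : ℝ} {u₁ u₂ : Circ}

theorem Circ.lift_zero_lt_lift (hu : u₁ ≠ u₂) :
    Circ.lift 0 u₂ < Circ.lift (Circ.lift 0 u₂) u₁ :=
  (Circ.lift_mem _ u₁).1.lt_of_ne fun h =>
    hu (Circ.lift_injective _ (h.symm.trans (Circ.lift_lift_zero_self u₂).symm))

theorem chart_squeeze_strictMono (hu : u₁ ≠ u₂) (ha : 0 < a) :
    StrictMono (squeeze (Circ.lift 0 u₂) (Circ.lift (Circ.lift 0 u₂) u₁) a) :=
  squeeze_strictMono (Circ.lift_zero_lt_lift hu) (Circ.lift_mem _ _).2 ha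

theorem chart_mem (hu : u₁ ≠ u₂) (ha : 0 < a) (z : Circ) :
    chart a u₁ u₂ z ∈ Set.Ico (-2 * a) (2 * a) ∧ a ≤ |chart a u₁ u₂ z| :=
  squeeze_mem (Circ.lift_zero_lt_lift hu) (Circ.lift_mem _ _).2 ha (Circ.lift_mem _ _)

theorem cyc_chart_iff (hu : u₁ ≠ u₂) (ha : 0 < a) {x y z : Circ} :
    Cyc (chart a u₁ u₂ x) (chart a u₁ u₂ y) (chart a u₁ u₂ z) ↔ sbtw x y z := by
  rw [Circ.sbtw_iff_cyc_lift (Circ.lift 0 u₂)]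
  exact Cyc.comp_strictMono (chart_squeeze_strictMono hu ha)

theorem chart_injective (hu : u₁ ≠ u₂) (ha : 0 < a) :
    Function.Injective (chart a u₁ u₂) :=
  (chart_squeeze_strictMono hu ha).injective.comp (Circ.lift_injective _)

theorem chart_left : chart a u₁ u₂ u₁ = a :=
  squeeze_self

theorem chart_right (hu : u₁ ≠ u₂) : chart a u₁ u₂ u₂ = -2 * a := by
  rw [chart, Circ.lift_lift_zero_self]
  exact squeeze_left (Circ.lift_zero_lt_lift hu)

end chart

section nestedChart

variable {κ : Type*} (ι : κ → ℕ) (u₁ u₂ : κ → Circ)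

/-- For injective `ι` the ranges `a ≤ |x| ≤ 2a` of these charts are disjoint and nested. -/
noncomputable def nestedChart (c : κ) (z : Circ) : ℝ :=
  chart (4⁻¹ ^ (ι c + 2)) (u₁ c) (u₂ c) z

variable {u₁ u₂}

theorem four_mul_four_inv_pow_le {m n : ℕ} (h : m < n) :
    4 * (4 : ℝ)⁻¹ ^ (n + 2) ≤ 4⁻¹ ^ (m + 2) := by
  calc 4 * (4 : ℝ)⁻¹ ^ (n + 2) = 4⁻¹ ^ (n + 1) := by ring
    _ ≤ 4⁻¹ ^ (m + 2) := pow_le_pow_of_le_one (by norm_num) (by norm_num) (by omega)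

theorem nestedChart_mem (hu : ∀ c, u₁ c ≠ u₂ c) (c : κ) (z : Circ) :
    nestedChart ι u₁ u₂ c z ∈ Set.Ico (-2 * 4⁻¹ ^ (ι c + 2)) (2 * 4⁻¹ ^ (ι c + 2)) ∧
      4⁻¹ ^ (ι c + 2) ≤ |nestedChart ι u₁ u₂ c z| :=
  chart_mem (hu c) (by positivity) z

theorem abs_nestedChart_le (hu : ∀ c, u₁ c ≠ u₂ c) (c : κ) (z : Circ) :
    |nestedChart ι u₁ u₂ c z| ≤ 2 * 4⁻¹ ^ (ι c + 2) :=
  abs_le.2 ⟨by linarith [(nestedChart_mem ι hu c z).1.1], (nestedChart_mem ι hu c z).1.2.le⟩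

theorem nestedChart_mem_Ioo (hu : ∀ c, u₁ c ≠ u₂ c) (c : κ) (z : Circ) :
    nestedChart ι u₁ u₂ c z ∈ Set.Ioo (-(1 / 2)) (1 / 2) := by
  have h := abs_nestedChart_le ι hu c z
  have : (4 : ℝ)⁻¹ ^ (ι c + 2) ≤ 4⁻¹ ^ 2 :=
    pow_le_pow_of_le_one (by norm_num) (by norm_num) (by omega)
  exact abs_lt.1 (by linarith)

theorem nestedChart_mem_Ico (hu : ∀ c, u₁ c ≠ u₂ c) (c : κ) (z : Circ) :
    nestedChart ι u₁ u₂ c z ∈ Set.Ico (-(1 / 2)) (-(1 / 2) + 1) := by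
  obtain ⟨h1, h2⟩ := nestedChart_mem_Ioo ι hu c z
  exact ⟨h1.le, by linarith⟩

theorem sbtw_coe_nestedChart_iff (hu : ∀ c, u₁ c ≠ u₂ c) (c : κ) (x y z : Circ) :
    sbtw (nestedChart ι u₁ u₂ c x : Circ) (nestedChart ι u₁ u₂ c y)
      (nestedChart ι u₁ u₂ c z) ↔ sbtw x y z := by
  rw [sbtw_coe_iff_cyc (nestedChart_mem_Ico ι hu c x) (nestedChart_mem_Ico ι hu c y)
    (nestedChart_mem_Ico ι hu c z)]
  exact cyc_chart_iff (hu c) (by positivity)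

theorem lt_abs_nestedChart (hu : ∀ c, u₁ c ≠ u₂ c) {c d : κ} (h : ι c < ι d) (x : Circ) :
    2 * 4⁻¹ ^ (ι d + 2) < |nestedChart ι u₁ u₂ c x| := by
  have := four_mul_four_inv_pow_le h
  have := (nestedChart_mem ι hu c x).2
  have : (0 : ℝ) < 4⁻¹ ^ (ι d + 2) := by positivity
  linarith

theorem abs_nestedChart_lt (hu : ∀ c, u₁ c ≠ u₂ c) {c d : κ} (h : ι d < ι c) (x : Circ) :
    |nestedChart ι u₁ u₂ c x| < 4⁻¹ ^ (ι d + 2) := by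
  have := four_mul_four_inv_pow_le h
  have := abs_nestedChart_le ι hu c x
  have : (0 : ℝ) < 4⁻¹ ^ (ι c + 2) := by positivity
  linarith

theorem nestedChart_injective (hι : Function.Injective ι) (hu : ∀ c, u₁ c ≠ u₂ c) :
    Function.Injective (Function.uncurry fun c z => (nestedChart ι u₁ u₂ c z : Circ)) := by
  rintro ⟨c, x⟩ ⟨d, y⟩ h
  have h' := (AddCircle.coe_eq_coe_iff_of_mem_Ico (nestedChart_mem_Ico ι hu c x)
    (nestedChart_mem_Ico ι hu d y)).1 h
  obtain rfl : c = d := by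
    by_contra hcd
    rcases lt_or_gt_of_ne (hι.ne hcd) with hlt | hlt
    · have := lt_abs_nestedChart ι hu hlt x
      rw [h'] at this
      linarith [abs_nestedChart_le ι hu d y]
    · have := lt_abs_nestedChart ι hu hlt y
      rw [← h'] at this
      linarith [abs_nestedChart_le ι hu c x]
  rw [chart_injective (hu c) (by positivity) h']

theorem sbtw_coe_nestedChart_congr (hι : Function.Injective ι) (hu : ∀ c, u₁ c ≠ u₂ c)
    {c d : κ} (hcd : c ≠ d) (x x' y z : Circ) :
    sbtw (nestedChart ι u₁ u₂ d y : Circ) (nestedChart ι u₁ u₂ c x)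
        (nestedChart ι u₁ u₂ d z) ↔
      sbtw (nestedChart ι u₁ u₂ d y : Circ) (nestedChart ι u₁ u₂ c x')
        (nestedChart ι u₁ u₂ d z) := by
  simp only [sbtw_coe_iff_cyc (nestedChart_mem_Ico ι hu _ _) (nestedChart_mem_Ico ι hu _ _)
    (nestedChart_mem_Ico ι hu _ _)]
  rcases lt_or_gt_of_ne (hι.ne hcd) with hlt | hlt
  · have hin : ∀ z, nestedChart ι u₁ u₂ d z ∈ Set.Icc (-(2 * 4⁻¹ ^ (ι d + 2)))
        (2 * 4⁻¹ ^ (ι d + 2)) := fun z => abs_le.1 (abs_nestedChart_le ι hu d z)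
    have hout : ∀ x, nestedChart ι u₁ u₂ c x ∉ Set.Icc (-(2 * 4⁻¹ ^ (ι d + 2)))
        (2 * 4⁻¹ ^ (ι d + 2)) := fun x hx =>
      (abs_le.2 hx).not_gt (lt_abs_nestedChart ι hu hlt x)
    exact Cyc.congr_of_notMem_Icc (hin y) (hin z) (hout x) (hout x')
  · have hin : ∀ x,
        nestedChart ι u₁ u₂ c x ∈ Set.Ioo (-4⁻¹ ^ (ι d + 2)) (4⁻¹ ^ (ι d + 2)) :=
      fun x => abs_lt.1 (abs_nestedChart_lt ι hu hlt x)
    have hout : ∀ z,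
        nestedChart ι u₁ u₂ d z ∉ Set.Ioo (-4⁻¹ ^ (ι d + 2)) (4⁻¹ ^ (ι d + 2)) :=
      fun z hz => (abs_lt.2 hz).not_ge (nestedChart_mem ι hu d z).2
    exact Cyc.congr_of_mem_Ioo (hout y) (hout z) (hin x) (hin x')

theorem neg_half_mem_Ico : -(1 / 2 : ℝ) ∈ Set.Ico (-(1 / 2)) (-(1 / 2) + 1) :=
  ⟨le_rfl, by norm_num⟩

theorem zero_mem_Ico_neg_half : (0 : ℝ) ∈ Set.Ico (-(1 / 2)) (-(1 / 2) + 1) :=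
  ⟨by norm_num, by norm_num⟩

theorem coe_nestedChart_ne_zero (hu : ∀ c, u₁ c ≠ u₂ c) (c : κ) (z : Circ) :
    (nestedChart ι u₁ u₂ c z : Circ) ≠ ((0 : ℝ) : Circ) := fun h => by
  have h0 := (AddCircle.coe_eq_coe_iff_of_mem_Ico (nestedChart_mem_Ico ι hu c z)
    zero_mem_Ico_neg_half).1 h
  have := (nestedChart_mem ι hu c z).2
  rw [h0, abs_zero] at this
  exact this.not_gt (by positivity)

theorem coe_nestedChart_ne_neg_half (hu : ∀ c, u₁ c ≠ u₂ c) (c : κ) (z : Circ) :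
    (nestedChart ι u₁ u₂ c z : Circ) ≠ ((-(1 / 2) : ℝ) : Circ) := fun h =>
  (nestedChart_mem_Ioo ι hu c z).1.ne' ((AddCircle.coe_eq_coe_iff_of_mem_Ico
    (nestedChart_mem_Ico ι hu c z) neg_half_mem_Ico).1 h)

theorem sbtw_coe_nestedChart_zero_or (hu : ∀ c, u₁ c ≠ u₂ c) {c : κ} {x y t : Circ}
    (ht : t = u₁ c ∨ t = u₂ c) (h : sbtw x t y) :
    sbtw (nestedChart ι u₁ u₂ c x : Circ) ((0 : ℝ) : Circ) (nestedChart ι u₁ u₂ c y) ∨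
      sbtw (nestedChart ι u₁ u₂ c x : Circ) ((-(1 / 2) : ℝ) : Circ)
        (nestedChart ι u₁ u₂ c y) := by
  rw [← sbtw_coe_nestedChart_iff ι hu c] at h
  simp only [sbtw_coe_iff_cyc (nestedChart_mem_Ico ι hu _ _) (nestedChart_mem_Ico ι hu _ _)
    (nestedChart_mem_Ico ι hu _ _), sbtw_coe_iff_cyc (nestedChart_mem_Ico ι hu _ _)
    zero_mem_Ico_neg_half (nestedChart_mem_Ico ι hu _ _), sbtw_coe_iff_cyc
    (nestedChart_mem_Ico ι hu _ _) neg_half_mem_Ico (nestedChart_mem_Ico ι hu _ _)] at h ⊢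
  have hs : nestedChart ι u₁ u₂ c t = 4⁻¹ ^ (ι c + 2) ∨
      nestedChart ι u₁ u₂ c t = -2 * 4⁻¹ ^ (ι c + 2) := by
    rcases ht with rfl | rfl
    exacts [Or.inl chart_left, Or.inr (chart_right (hu c))]
  refine (Cyc.zero_or_lt (by positivity) (nestedChart_mem ι hu c x).1.1
    (nestedChart_mem ι hu c x).2 hs h).imp id fun hlt => Or.inr (Or.inl ⟨?_, hlt⟩)
  exact (nestedChart_mem_Ioo ι hu c y).1

end nestedChart

theorem SimpleGraph.ConnectedComponent.apply_mk_eq {V : Type} {G : SimpleGraph V} {β : Sort*}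
    (f : ∀ c : G.ConnectedComponent, c.supp → β) {c : G.ConnectedComponent} (x : c.supp) :
    f (G.connectedComponentMk x) ⟨x, rfl⟩ = f c x := by
  obtain ⟨v, hv⟩ := x
  change G.connectedComponentMk v = c at hv
  subst hv
  rfl

namespace CircleRep

variable {V : Type} {G : SimpleGraph V}
  (R : ∀ c : G.ConnectedComponent, CircleRep c.supp (G.induce c.supp))
  (φ : G.ConnectedComponent → Circ → Circ)

def glueP (v : V) : Circ :=
  φ (G.connectedComponentMk v) ((R (G.connectedComponentMk v)).p ⟨v, rfl⟩)

def glueQ (v : V) : Circ :=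
  φ (G.connectedComponentMk v) ((R (G.connectedComponentMk v)).q ⟨v, rfl⟩)

theorem glueP_eq {c : G.ConnectedComponent} {v : V} (hv : v ∈ c.supp) :
    glueP R φ v = φ c ((R c).p ⟨v, hv⟩) :=
  ConnectedComponent.apply_mk_eq (fun c x => φ c ((R c).p x)) ⟨v, hv⟩

theorem glueQ_eq {c : G.ConnectedComponent} {v : V} (hv : v ∈ c.supp) :
    glueQ R φ v = φ c ((R c).q ⟨v, hv⟩) :=
  ConnectedComponent.apply_mk_eq (fun c x => φ c ((R c).q x)) ⟨v, hv⟩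

variable {R φ}

theorem glue_injective (hinj : Function.Injective (Function.uncurry φ)) :
    Function.Injective (Sum.elim (glueP R φ) (glueQ R φ)) := by
  have key : ∀ {a b : V} (f g : ∀ c : G.ConnectedComponent, c.supp → Circ),
      φ (G.connectedComponentMk a) (f (G.connectedComponentMk a) ⟨a, rfl⟩) =
          φ (G.connectedComponentMk b) (g (G.connectedComponentMk b) ⟨b, rfl⟩) →
        ∃ hb : b ∈ (G.connectedComponentMk a).supp,
          f (G.connectedComponentMk a) ⟨a, rfl⟩ = g (G.connectedComponentMk a) ⟨b, hb⟩ := by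
    intro a b f g h
    obtain ⟨hab, h'⟩ := Prod.ext_iff.1 (@hinj (_, _) (_, _) h)
    exact ⟨hab.symm, h'.trans (ConnectedComponent.apply_mk_eq g ⟨b, hab.symm⟩)⟩
  rintro (a | a) (b | b) h
  · obtain ⟨_, h'⟩ := key (fun c => (R c).p) (fun c => (R c).p) h
    exact congrArg Sum.inl (congrArg Subtype.val ((R _).p_injective h'))
  · obtain ⟨_, h'⟩ := key (fun c => (R c).p) (fun c => (R c).q) h
    exact ((R _).p_ne_q _ _ h').elim
  · obtain ⟨_, h'⟩ := key (fun c => (R c).q) (fun c => (R c).p) h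
    exact ((R _).p_ne_q _ _ h'.symm).elim
  · obtain ⟨_, h'⟩ := key (fun c => (R c).q) (fun c => (R c).q) h
    exact congrArg Sum.inr (congrArg Subtype.val ((R _).q_injective h'))

theorem glue_adj (hsbtw : ∀ c x y z, sbtw (φ c x) (φ c y) (φ c z) ↔ sbtw x y z)
    (hsep : ∀ c d, c ≠ d → ∀ x x' y z,
      sbtw (φ d y) (φ c x) (φ d z) ↔ sbtw (φ d y) (φ c x') (φ d z)) (u v : V) :
    G.Adj u v ↔ u ≠ v ∧ Xor (sbtw (glueP R φ v) (glueP R φ u) (glueQ R φ v))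
      (sbtw (glueP R φ v) (glueQ R φ u) (glueQ R φ v)) := by
  by_cases huv : G.connectedComponentMk u = G.connectedComponentMk v
  · have hu : u ∈ (G.connectedComponentMk v).supp := huv
    rw [glueP_eq R φ hu, glueQ_eq R φ hu, glueP, glueQ, hsbtw, hsbtw,
      ← induce_adj (s := (G.connectedComponentMk v).supp) (u := ⟨u, hu⟩) (v := ⟨v, rfl⟩),
      (R _).adj]
    exact and_congr_left' (not_congr Subtype.ext_iff)
  · have hadj : ¬G.Adj u v := fun h => huv (ConnectedComponent.sound h.reachable)
    rw [iff_false_intro hadj, false_iff, glueP, glueP, glueQ, glueQ,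
      hsep _ _ huv _ ((R _).q ⟨u, rfl⟩)]
    exact fun h => (_root_.xor_self _).mp h.2

def glue (hinj : Function.Injective (Function.uncurry φ))
    (hsbtw : ∀ c x y z, sbtw (φ c x) (φ c y) (φ c z) ↔ sbtw x y z)
    (hsep : ∀ c d, c ≠ d → ∀ x x' y z,
      sbtw (φ d y) (φ c x) (φ d z) ↔ sbtw (φ d y) (φ c x') (φ d z)) :
    CircleRep V G :=
  ⟨glueP R φ, glueQ R φ, glue_injective hinj, glue_adj hsbtw hsep⟩

end CircleRep

section glueCorners

variable {κ : Type*} [Fintype κ] (T : κ → Finset Circ) (ι : κ → ℕ)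
  (u₁ u₂ : κ → Circ)

open Classical in
/-- Corners for the charted circles: `0` and `-1/2` stand in for all the cut points. -/
noncomputable def glueCorners : Finset Circ :=
  insert ((0 : ℝ) : Circ) (insert ((-(1 / 2) : ℝ) : Circ) (Finset.univ.biUnion fun c =>
    (((T c).erase (u₁ c)).erase (u₂ c)).image fun z => (nestedChart ι u₁ u₂ c z : Circ)))

variable {T u₁ u₂}

theorem card_glueCorners_add_le (hu₁ : ∀ c, u₁ c ∈ T c) (hu₂ : ∀ c, u₂ c ∈ T c)
    (hu : ∀ c, u₁ c ≠ u₂ c) :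
    (glueCorners T ι u₁ u₂).card + 2 * Fintype.card κ ≤ ∑ c, (T c).card + 2 := by
  classical
  unfold glueCorners
  set img := fun c : κ => (((T c).erase (u₁ c)).erase (u₂ c)).image fun z =>
    (nestedChart ι u₁ u₂ c z : Circ)
  have himg : ∀ c : κ, (img c).card + 2 ≤ (T c).card := fun c => by
    have := Finset.one_lt_card.2 ⟨u₁ c, hu₁ c, u₂ c, hu₂ c, hu c⟩
    calc (img c).card + 2 ≤ (((T c).erase (u₁ c)).erase (u₂ c)).card + 2 :=
          Nat.add_le_add_right Finset.card_image_le 2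
      _ = (T c).card := by
          rw [Finset.card_erase_of_mem (Finset.mem_erase.2 ⟨(hu c).symm, hu₂ c⟩),
            Finset.card_erase_of_mem (hu₁ c)]
          omega
  have hsum : ∑ c, (img c).card + 2 * Fintype.card κ ≤ ∑ c, (T c).card := by
    rw [← Finset.card_univ, mul_comm, ← smul_eq_mul, ← Finset.sum_const,
      ← Finset.sum_add_distrib]
    exact Finset.sum_le_sum fun c _ => himg c
  have h1 := Finset.card_insert_le ((0 : ℝ) : Circ)
    (insert ((-(1 / 2) : ℝ) : Circ) (Finset.univ.biUnion img))
  have h2 := Finset.card_insert_le ((-(1 / 2) : ℝ) : Circ) (Finset.univ.biUnion img)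
  have h3 := Finset.card_biUnion_le (s := Finset.univ) (t := img)
  omega

theorem exists_mem_glueCorners_sbtw (hu : ∀ c, u₁ c ≠ u₂ c) {c : κ} {P Q : Circ}
    (h : ∃ t ∈ T c, sbtw P t Q) :
    ∃ t ∈ glueCorners T ι u₁ u₂,
      sbtw (nestedChart ι u₁ u₂ c P : Circ) t (nestedChart ι u₁ u₂ c Q) := by
  classical
  obtain ⟨t, ht, hPQ⟩ := h
  by_cases hcut : t = u₁ c ∨ t = u₂ c
  · rcases sbtw_coe_nestedChart_zero_or ι hu hcut hPQ with h0 | h0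
    · exact ⟨_, Finset.mem_insert_self _ _, h0⟩
    · exact ⟨_, Finset.mem_insert_of_mem (Finset.mem_insert_self _ _), h0⟩
  · rw [not_or] at hcut
    refine ⟨nestedChart ι u₁ u₂ c t, ?_, (sbtw_coe_nestedChart_iff ι hu c P t Q).2 hPQ⟩
    unfold glueCorners
    exact Finset.mem_insert_of_mem (Finset.mem_insert_of_mem (Finset.mem_biUnion.2
      ⟨c, Finset.mem_univ _, Finset.mem_image_of_mem _
        (Finset.mem_erase.2 ⟨hcut.2, Finset.mem_erase.2 ⟨hcut.1, ht⟩⟩)⟩))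

end glueCorners

theorem exists_goodCorners_glueCorners {V : Type} {G : SimpleGraph V}
    [Fintype G.ConnectedComponent]
    {R : ∀ c : G.ConnectedComponent, CircleRep c.supp (G.induce c.supp)}
    {T : G.ConnectedComponent → Finset Circ} (hT : ∀ c, (R c).GoodCorners (T c))
    {ι : G.ConnectedComponent → ℕ} (hι : Function.Injective ι)
    {u₁ u₂ : G.ConnectedComponent → Circ} (hu : ∀ c, u₁ c ≠ u₂ c) :
    ∃ R' : CircleRep V G, R'.GoodCorners (glueCorners T ι u₁ u₂) := by
  classical
  refine ⟨CircleRep.glue (R := R) (nestedChart_injective ι hι hu)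
    (sbtw_coe_nestedChart_iff ι hu) (fun _ _ hcd => sbtw_coe_nestedChart_congr ι hι hu hcd),
    fun t ht v => ?_, fun v => ?_⟩
  · simp only [glueCorners, Finset.mem_insert, Finset.mem_biUnion, Finset.mem_image,
      Finset.mem_erase, Finset.mem_univ, true_and] at ht
    rcases ht with rfl | rfl | ⟨c, s, ⟨-, -, hs⟩, rfl⟩
    · exact ⟨(coe_nestedChart_ne_zero ι hu _ _).symm,
        (coe_nestedChart_ne_zero ι hu _ _).symm⟩
    · exact ⟨(coe_nestedChart_ne_neg_half ι hu _ _).symm,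
        (coe_nestedChart_ne_neg_half ι hu _ _).symm⟩
    · have key : ∀ z, (nestedChart ι u₁ u₂ c s : Circ) =
          nestedChart ι u₁ u₂ (G.connectedComponentMk v) z →
            c = G.connectedComponentMk v ∧ s = z := fun z h =>
        Prod.ext_iff.1 (nestedChart_injective ι hι hu (a₁ := (c, s)) (a₂ := (_, z)) h)
      constructor <;> intro h <;> obtain ⟨rfl, rfl⟩ := key _ h
      exacts [((hT _).1 _ hs ⟨v, rfl⟩).1 rfl, ((hT _).1 _ hs ⟨v, rfl⟩).2 rfl]
  · obtain ⟨h1, h2⟩ := (R _).satChord_iff.1 ((hT _).2 ⟨v, rfl⟩)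
    exact (CircleRep.satChord_iff _).2 ⟨exists_mem_glueCorners_sbtw ι hu h1,
      exists_mem_glueCorners_sbtw ι hu h2⟩

theorem polygonNumber_add_le {V : Type} [Finite V] {G : SimpleGraph V}
    [Fintype G.ConnectedComponent] (h : Nonempty (CircleRep V G)) :
    polygonNumber G + 2 * Fintype.card G.ConnectedComponent ≤
      ∑ c : G.ConnectedComponent, polygonNumber (G.induce c.supp) + 2 := by
  obtain ⟨R₀⟩ := h
  choose R T hcard hT using fun c : G.ConnectedComponent =>
    exists_goodCorners_card_eq_polygonNumber ⟨R₀.restrict c.supp⟩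
  have hT2 : ∀ c, 1 < (T c).card := fun c => by
    obtain ⟨v, hv⟩ := c.nonempty_supp
    exact (R c).one_lt_card_of_satChord ((hT c).2 ⟨v, hv⟩)
  choose u₁ hu₁ u₂ hu₂ hu using fun c => Finset.one_lt_card.1 (hT2 c)
  obtain ⟨ι, hι⟩ := exists_injective_nat G.ConnectedComponent
  obtain ⟨R', hR'⟩ := exists_goodCorners_glueCorners hT hι hu
  calc polygonNumber G + 2 * Fintype.card G.ConnectedComponent
      ≤ (glueCorners T ι u₁ u₂).card + 2 * Fintype.card G.ConnectedComponent := by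
        gcongr; exact polygonNumber_le_card R' hR'
    _ ≤ ∑ c, (T c).card + 2 := card_glueCorners_add_le ι hu₁ hu₂ hu
    _ = ∑ c : G.ConnectedComponent, polygonNumber (G.induce c.supp) + 2 := by simp only [hcard]

theorem stmt0_general {V : Type} [Fintype V] (G : SimpleGraph V)
    [Fintype G.ConnectedComponent]
    (hcirc : Nonempty (CircleRep V G)) :
    polygonNumber G =
      (∑ c : G.ConnectedComponent, polygonNumber (G.induce c.supp)) -
        2 * (Fintype.card G.ConnectedComponent - 1) := by
  rcases isEmpty_or_nonempty V with hV | hV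
  · simp [polygonNumber_eq_zero_of_isEmpty hcirc]
  obtain ⟨R, T, hcard, hT⟩ := exists_goodCorners_card_eq_polygonNumber hcirc
  have hlower := R.sum_polygonNumber_add_two_le hT.1 Finset.univ_nonempty fun v _ => hT.2 v
  have hupper := polygonNumber_add_le hcirc
  have hr : 0 < Fintype.card G.ConnectedComponent := Fintype.card_pos
  rw [Finset.card_univ] at hlower
  omega

/-- For any circle graph `G` with connected components `G_1, …, G_r`,
`ψ(G) = (Σ ψ(G_i)) − 2(r−1)`. -/
theorem stmt0 {V : Type} [Fintype V] [DecidableEq V] (G : SimpleGraph V)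
    [DecidableRel G.Adj] [Fintype G.ConnectedComponent]
    (hcirc : Nonempty (CircleRep V G)) (hne : Nonempty V) :
    polygonNumber G =
      (∑ c : G.ConnectedComponent, polygonNumber (G.induce c.supp)) -
        2 * (Fintype.card G.ConnectedComponent - 1) :=
  stmt0_general G hcirc
end

section
/- If a set of corner points added to a circle representation satisfies every peripheral chord (places a corner in each arc of each peripheral chord), then it satisfies all chords of the representation. -/
open SimpleGraph

private lemma sbtw_ne₁ {α : Type*} [CircularOrder α] {a b c : α} (h : sbtw a b c) : a ≠ b :=
  fun e => sbtw_irrefl_left (e ▸ h)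
private lemma sbtw_ne₂ {α : Type*} [CircularOrder α] {a b c : α} (h : sbtw a b c) : b ≠ c :=
  fun e => sbtw_irrefl_right (e ▸ h)
private lemma sbtw_ne₃ {α : Type*} [CircularOrder α] {a b c : α} (h : sbtw a b c) : a ≠ c :=
  fun e => sbtw_irrefl_left_right (e ▸ h)

/-- transitivity: a,e,x,f,c in order. -/
private lemma inner_mem {α : Type*} [CircularOrder α] {a c e f x : α}
    (h2 : sbtw a f c) (hef : sbtw a e f) (hx : sbtw e x f) : sbtw a x c := by
  have h4 : sbtw a x f := sbtw_trans_left hef hx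
  have := sbtw_trans_left h4.cyclic_left h2.cyclic_left
  exact this.cyclic_right

/-- two points in an open arc split it; one subarc is inside. -/
private lemma arc_split {α : Type*} [CircularOrder α] {a c e f : α}
    (h1 : sbtw a e c) (h2 : sbtw a f c) (hef : e ≠ f) :
    sbtw a e f ∨ sbtw a f e := by
  rcases btw_total a e f with h | h
  · left
    refine h.sbtw_of_not_btw fun h' => ?_
    rcases btw_antisymm h h' with h'' | h'' | h''
    · exact (sbtw_ne₁ h1) h''
    · exact hef h''
    · exact (sbtw_ne₁ h2) h''.symm
  · right
    refine (h.cyclic_left.cyclic_left).sbtw_of_not_btw fun h' => ?_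
    rcases btw_antisymm h'.cyclic_left.cyclic_left h with h'' | h'' | h''
    · exact (sbtw_ne₁ h1) h''
    · exact hef h''
    · exact (sbtw_ne₁ h2) h''.symm
private lemma pq_ne {V : Type} {G : SimpleGraph V} (R : CircleRep V G) (w : V) :
    R.p w ≠ R.q w := by
  intro h
  have := R.inj (a₁ := Sum.inl w) (a₂ := Sum.inr w) (by simpa using h)
  simp at this

private lemma nest {V : Type} {G : SimpleGraph V} (R : CircleRep V G) {v w : V} {b : Bool}
    (hp : R.p w ∈ R.ArcSet v b) (hq : R.q w ∈ R.ArcSet v b) :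
    ∃ b', R.ArcSet w b' ⊆ R.ArcSet v b := by
  have hne := pq_ne R w
  cases b <;> simp only [CircleRep.ArcSet, if_true, if_false, Set.mem_setOf_eq,
      Bool.false_eq_true] at hp hq ⊢
  · rcases arc_split hp hq hne with h | h
    · exact ⟨true, fun x hx => by
        simp only [if_true, Set.mem_setOf_eq] at hx ⊢; exact inner_mem hq h hx⟩
    · exact ⟨false, fun x hx => by
        simp only [if_false, Bool.false_eq_true, Set.mem_setOf_eq] at hx ⊢
        exact inner_mem hp h hx⟩
  · rcases arc_split hp hq hne with h | h
    · exact ⟨true, fun x hx => by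
        simp only [if_true, Set.mem_setOf_eq] at hx ⊢; exact inner_mem hq h hx⟩
    · exact ⟨false, fun x hx => by
        simp only [if_false, Bool.false_eq_true, Set.mem_setOf_eq] at hx ⊢
        exact inner_mem hp h hx⟩

private lemma key {V : Type} [Fintype V] {G : SimpleGraph V} (R : CircleRep V G)
    (T : Finset Circ) (hper : ∀ v : V, R.Peripheral v → R.SatChord T v) :
    ∀ n : ℕ, ∀ u : V, ∀ b : Bool,
      {w : V | R.p w ∈ R.ArcSet u b ∧ R.q w ∈ R.ArcSet u b}.ncard ≤ n →
      ∃ t ∈ T, t ∈ R.ArcSet u b := by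
  intro n
  induction n with
  | zero =>
    intro u b hcard
    have hempty : {w : V | R.p w ∈ R.ArcSet u b ∧ R.q w ∈ R.ArcSet u b} = ∅ := by
      rw [← Set.ncard_eq_zero (Set.toFinite _)]; omega
    have hperu : R.Peripheral u := by
      refine ⟨b, fun w hw => ?_⟩
      exact absurd hw (by simpa [Set.eq_empty_iff_forall_notMem] using
        (Set.eq_empty_iff_forall_notMem.mp hempty w))
    have := hper u hperu
    cases b
    · exact this.2
    · exact this.1
  | succ n ih =>
    intro u b hcard
    by_cases hne : {w : V | R.p w ∈ R.ArcSet u b ∧ R.q w ∈ R.ArcSet u b} = ∅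
    · have hperu : R.Peripheral u :=
        ⟨b, fun w hw => (Set.eq_empty_iff_forall_notMem.mp hne w) hw⟩
      have := hper u hperu
      cases b
      · exact this.2
      · exact this.1
    · obtain ⟨w, hw⟩ := Set.nonempty_iff_ne_empty.mpr hne
      obtain ⟨b', hsub⟩ := nest R hw.1 hw.2
      have hwnot : w ∉ {z : V | R.p z ∈ R.ArcSet w b' ∧ R.q z ∈ R.ArcSet w b'} := by
        intro hz
        have := hz.1
        cases b' <;> simp only [CircleRep.ArcSet, if_true, if_false, Bool.false_eq_true,
            Set.mem_setOf_eq] at this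
        · exact sbtw_ne₂ this rfl
        · exact sbtw_ne₁ this rfl
      have hss : {z : V | R.p z ∈ R.ArcSet w b' ∧ R.q z ∈ R.ArcSet w b'} ⊂
          {z : V | R.p z ∈ R.ArcSet u b ∧ R.q z ∈ R.ArcSet u b} := by
        constructor
        · exact fun z hz => ⟨hsub hz.1, hsub hz.2⟩
        · intro hcon
          exact hwnot (hcon hw)
      have hlt := Set.ncard_lt_ncard hss (Set.toFinite _)
      obtain ⟨t, ht, htmem⟩ := ih w b' (by omega)
      exact ⟨t, ht, hsub htmem⟩

/-- if a set of corner points satisfies every peripheral chord,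
then it satisfies all chords. -/
theorem stmt3 {V : Type} [Fintype V] (G : SimpleGraph V) (R : CircleRep V G)
    (T : Finset Circ) (hT : ∀ t ∈ T, ∀ v : V, t ≠ R.p v ∧ t ≠ R.q v)
    (hper : ∀ v : V, R.Peripheral v → R.SatChord T v) :
    ∀ v : V, R.SatChord T v := by
  intro v
  constructor
  · obtain ⟨t, ht, hm⟩ := key R T hper (Fintype.card V) v true (by
      have h := Set.ncard_le_ncard (Set.subset_univ
        {w : V | R.p w ∈ R.ArcSet v true ∧ R.q w ∈ R.ArcSet v true}) Set.finite_univ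
      simpa [Set.ncard_univ, Nat.card_eq_fintype_card] using h)
    exact ⟨t, ht, hm⟩
  · obtain ⟨t, ht, hm⟩ := key R T hper (Fintype.card V) v false (by
      have h := Set.ncard_le_ncard (Set.subset_univ
        {w : V | R.p w ∈ R.ArcSet v false ∧ R.q w ∈ R.ArcSet v false}) Set.finite_univ
      simpa [Set.ncard_univ, Nat.card_eq_fintype_card] using h)
    exact ⟨t, ht, hm⟩
end

section
/- If G is a bipartite graph whose complement is a circle graph, then G is itself a circle graph. -/
open SimpleGraph

/-!
Write `H = Gᶜ`; the two sides `A`, `Aᶜ` of `G` are cliques of `H`. Rank the `2 n` chord ends of a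
circle representation of `H` around the circle. The windows of `n` consecutive ranks move one step
at a time and the windows `[0, n)` and `[n, 2 n)` together hold the `2 |A|` ends of the chords of
`A`, so some window holds exactly `|A|` of them, and then `|Aᶜ|` ends of chords of `Aᶜ`. A chord
with both ends in the window does not cross a chord with both ends outside it, so within a clique
either every chord has an end in the window or every chord has an end outside it; the counts then
force every chord to have exactly one end in the window. Cutting the circle at the window turns the
diagram into a permutation representation of `H`; reversing one of its two lines gives one of `G`,
and laying both lines back on the circle gives a circle representation of `G`.
-/

open Finset

lemma toIcoMod_one_eq {x y : ℝ} (hx : x ∈ Set.Ico (0 : ℝ) 1) (hy : y ∈ Set.Ico (0 : ℝ) 1) :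
    toIcoMod one_pos x y = if x ≤ y then y else y + 1 := by
  obtain ⟨hx0, hx1⟩ := hx
  obtain ⟨hy0, hy1⟩ := hy
  rw [toIcoMod_eq_iff]
  split_ifs with h
  · exact ⟨⟨h, by linarith⟩, 0, by simp⟩
  · exact ⟨⟨by linarith, by linarith⟩, -1, by simp⟩

lemma toIocMod_one_eq {x y : ℝ} (hx : x ∈ Set.Ico (0 : ℝ) 1) (hy : y ∈ Set.Ico (0 : ℝ) 1) :
    toIocMod one_pos x y = if x < y then y else y + 1 := by
  obtain ⟨hx0, hx1⟩ := hx
  obtain ⟨hy0, hy1⟩ := hy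
  rw [toIocMod_eq_iff]
  split_ifs with h
  · exact ⟨⟨h, by linarith⟩, 0, by simp⟩
  · exact ⟨⟨by linarith, by linarith⟩, -1, by simp⟩

lemma sbtw_coe_iff {x y z : ℝ} (hx : x ∈ Set.Ico (0 : ℝ) 1) (hy : y ∈ Set.Ico (0 : ℝ) 1)
    (hz : z ∈ Set.Ico (0 : ℝ) 1) :
    sbtw (x : Circ) y z ↔ x < y ∧ y < z ∨ y < z ∧ z < x ∨ z < x ∧ x < y := by
  rw [sbtw_iff_btw_not_btw, QuotientAddGroup.btw_coe_iff, QuotientAddGroup.btw_coe_iff,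
    toIcoMod_one_eq hx hy, toIocMod_one_eq hx hz, toIcoMod_one_eq hz hy, toIocMod_one_eq hz hx]
  split_ifs <;> grind

lemma coe_injOn_Ico : Set.InjOn (fun x : ℝ => (x : Circ)) (Set.Ico 0 1) := fun x hx y hy h =>
  (AddCircle.coe_eq_coe_iff_of_mem_Ico (a := 0) (by simpa using hx) (by simpa using hy)).1 h

lemma exists_equiv_fin_lt_iff {X α : Type*} [Fintype X] [LinearOrder α] {f : X → α}
    (hf : Function.Injective f) {N : ℕ} (hN : Fintype.card X = N) :
    ∃ r : X ≃ Fin N, ∀ x y, r x < r y ↔ f x < f y := by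
  let _ : LinearOrder X := LinearOrder.lift' f hf
  exact ⟨(Fintype.orderIsoFinOfCardEq X hN).symm.toEquiv, fun _ _ =>
    (Fintype.orderIsoFinOfCardEq X hN).symm.lt_iff_lt⟩

lemma exists_equiv_fin_sbtw_iff {X : Type*} [Fintype X] {P : X → Circ}
    (hP : Function.Injective P) {N : ℕ} (hN : Fintype.card X = N) :
    ∃ r : X ≃ Fin N, ∀ x y z, sbtw (P x) (P y) (P z) ↔ sbtw (r x) (r y) (r z) := by
  let E : X → ℝ := fun x => AddCircle.equivIco 1 0 (P x)
  have hE : ∀ x, E x ∈ Set.Ico (0 : ℝ) 1 := fun x => by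
    simpa using (AddCircle.equivIco 1 0 (P x)).2
  have hPE : ∀ x, ((E x : ℝ) : Circ) = P x := fun x =>
    (AddCircle.equivIco 1 0).symm_apply_apply (P x)
  obtain ⟨r, hr⟩ := exists_equiv_fin_lt_iff (f := E) (fun x y h => hP (by rw [← hPE, h, hPE])) hN
  refine ⟨r, fun x y z => ?_⟩
  rw [← hPE, ← hPE, ← hPE, sbtw_coe_iff (hE x) (hE y) (hE z), Fin.sbtw_iff]
  simp only [hr]

lemma exists_eq_of_succ_le_add_one {g : ℕ → ℤ} (hg : ∀ i, g (i + 1) ≤ g i + 1) {k : ℤ} :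
    ∀ {m : ℕ}, g 0 ≤ k → k ≤ g m → ∃ i ≤ m, g i = k
  | 0, h0, hm => ⟨0, le_rfl, le_antisymm h0 hm⟩
  | m + 1, h0, hm => by
    by_cases hk : k ≤ g m
    · obtain ⟨i, hi, hgi⟩ := exists_eq_of_succ_le_add_one hg h0 hk
      exact ⟨i, by omega, hgi⟩
    · exact ⟨m + 1, le_rfl, by linarith [hg m]⟩

lemma card_filter_le_card_filter_add_one {X : Type*} [Fintype X] {P Q : X → Prop}
    [DecidablePred P] [DecidablePred Q] {f : X → ℕ} (hf : Function.Injective f) {c : ℕ}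
    (h : ∀ x, P x → Q x ∨ f x = c) : #{x | P x} ≤ #{x | Q x} + 1 := by
  classical
  calc #{x | P x} ≤ #(filter Q univ ∪ filter (fun x => f x = c) univ) :=
        card_le_card fun x hx => by simpa [mem_filter] using h x (by simpa using hx)
    _ ≤ #{x | Q x} + #{x | f x = c} := card_union_le _ _
    _ ≤ #{x | Q x} + 1 := by
        gcongr
        exact card_le_one.mpr fun x hx y hy => hf (by simp_all)

/-- The count changes by at most one from a window to the next, and the windows `[0, n)` and
`[n, 2 n)` together count every element once. -/
lemma exists_balanced_window {X : Type*} [Fintype X] {n a : ℕ} (r : X ≃ Fin (2 * n))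
    (p : X → Prop) [DecidablePred p] (hp : #{x | p x} = 2 * a) :
    ∃ i ≤ n, #{x | p x ∧ (r x : ℕ) ∈ Set.Ico i (i + n)} = a := by
  set g : ℕ → ℕ := fun i => #{x | p x ∧ (r x : ℕ) ∈ Set.Ico i (i + n)}
  have hinj : Function.Injective fun x => (r x : ℕ) := Fin.val_injective.comp r.injective
  have hup : ∀ i, g (i + 1) ≤ g i + 1 := fun i =>
    card_filter_le_card_filter_add_one hinj (c := i + n) fun x ⟨hpx, h1, h2⟩ =>
      (by simp only [Set.mem_Ico]; omega :
        (r x : ℕ) ∈ Set.Ico i (i + n) ∨ (r x : ℕ) = i + n).imp_left (⟨hpx, ·⟩)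
  have hdown : ∀ i, g i ≤ g (i + 1) + 1 := fun i =>
    card_filter_le_card_filter_add_one hinj (c := i) fun x ⟨hpx, h1, h2⟩ =>
      (by simp only [Set.mem_Ico]; omega :
        (r x : ℕ) ∈ Set.Ico (i + 1) (i + 1 + n) ∨ (r x : ℕ) = i).imp_left (⟨hpx, ·⟩)
  have hsum : g 0 + g n = 2 * a := by
    rw [← hp, ← card_filter_add_card_filter_not (s := filter p univ) (fun x => (r x : ℕ) < n),
      filter_filter, filter_filter]
    exact congrArg₂ (· + ·)
      (congrArg card (filter_congr fun x _ => and_congr_right fun _ => by simp))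
      (congrArg card (filter_congr fun x _ => and_congr_right fun _ => by simp; omega))
  rcases le_total (g 0) a with h | h
  · obtain ⟨i, hi, hgi⟩ := exists_eq_of_succ_le_add_one (g := fun i => (g i : ℤ))
      (fun i => by exact_mod_cast hup i) (k := a) (m := n) (by exact_mod_cast h) (by omega)
    exact ⟨i, hi, by exact_mod_cast hgi⟩
  · obtain ⟨i, hi, hgi⟩ := exists_eq_of_succ_le_add_one (g := fun i => -(g i : ℤ))
      (fun i => by have := hdown i; omega) (k := -a) (m := n) (by omega) (by omega)
    exact ⟨i, hi, show g i = a by omega⟩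

lemma card_filter_sum_type {α β : Type*} [Fintype α] [Fintype β] (p : α ⊕ β → Prop)
    [DecidablePred p] : #{x | p x} = #{a | p (.inl a)} + #{b | p (.inr b)} := by
  simp only [card_filter, Fintype.sum_sum_type]

lemma card_filter_and_add_card_filter_and_not {α : Type*} [Fintype α] (C P : α → Prop)
    [DecidablePred C] [DecidablePred P] : #{x | C x ∧ P x} + #{x | ¬ C x ∧ P x} = #{x | P x} := by
  rw [← card_filter_add_card_filter_not (s := filter P univ) C, filter_filter, filter_filter]
  simp only [and_comm]

lemma card_filter_fin_Ico {N i n : ℕ} (h : i + n ≤ N) :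
    #{k : Fin N | (k : ℕ) ∈ Set.Ico i (i + n)} = n := by
  calc _ = #(Ico i (i + n)) := by
        rw [← card_map Fin.valEmbedding]
        congr 1
        ext m
        simp only [mem_map, mem_filter, mem_univ, true_and, Fin.valEmbedding_apply, mem_Ico,
          Set.mem_Ico]
        exact ⟨fun ⟨k, hk, hkm⟩ => hkm ▸ hk, fun hm => ⟨⟨m, by omega⟩, hm, rfl⟩⟩
    _ = n := by simp

lemma forall_xor_of_card_add_card_eq {ι : Type*} [Fintype ι] {C P Q : ι → Prop}
    [DecidablePred C] [DecidablePred P] [DecidablePred Q]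
    (hcard : #{v | C v ∧ P v} + #{v | C v ∧ Q v} = #{v | C v})
    (h : ∀ u w, C u → C w → P u → Q u → P w ∨ Q w) : ∀ v, C v → Xor (P v) (Q v) := by
  set d : ι → ℕ := fun v => (if P v then 1 else 0) + (if Q v then 1 else 0)
  have hsum : ∑ v ∈ {v | C v}, d v = ∑ v ∈ {v | C v}, 1 := by
    rw [sum_add_distrib, ← card_filter, ← card_filter, filter_filter, filter_filter, hcard,
      card_eq_sum_ones]
  intro v hv
  by_contra hx
  by_cases hboth : P v ∧ Q v
  · have : ∑ v ∈ {v | C v}, 1 < ∑ v ∈ {v | C v}, d v := sum_lt_sum (fun u hu => by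
      rcases h v u hv (by simpa using hu) hboth.1 hboth.2 with h' | h' <;> simp [d, h'])
      ⟨v, by simpa using hv, by simp [d, hboth]⟩
    omega
  · have hnone : ¬ P v ∧ ¬ Q v := by simp only [xor_iff_not_iff] at hx; tauto
    have : ∑ v ∈ {v | C v}, d v < ∑ v ∈ {v | C v}, 1 := sum_lt_sum (fun u hu => by
      by_cases hPu : P u <;> by_cases hQu : Q u <;> simp [d, hPu, hQu]
      have := h u v (by simpa using hu) hv hPu hQu; tauto) ⟨v, by simpa using hv, by simp [d, hnone]⟩
    omega

/-- Segments joining `(a v, 0)` to `(b v, 1)` between two parallel lines: they cross iff the two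
lines order their ends differently. -/
structure PermutationRep (V : Type) (G : SimpleGraph V) where
  a : V → ℝ
  b : V → ℝ
  a_injective : Function.Injective a
  b_injective : Function.Injective b
  adj : ∀ u v, G.Adj u v ↔ u ≠ v ∧ Xor (a v < a u) (b v < b u)

namespace PermutationRep

variable {V : Type} {G : SimpleGraph V}

def compl (P : PermutationRep V G) : PermutationRep V Gᶜ where
  a := P.a
  b v := -P.b v
  a_injective := P.a_injective
  b_injective := neg_injective.comp P.b_injective
  adj u v := by
    rw [compl_adj, P.adj, neg_lt_neg_iff]
    refine and_congr_right fun huv => ?_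
    rw [and_iff_right huv, ← not_lt.trans (P.b_injective.ne huv).le_iff_lt, xor_not_right, not_xor]

noncomputable def squash (t : ℝ) : ℝ := (orderIsoIooNegOneOne ℝ t + 1) / 4

lemma squash_strictMono : StrictMono squash := fun s t h => by
  unfold squash; gcongr

lemma squash_pos (t : ℝ) : 0 < squash t := by
  have := (orderIsoIooNegOneOne ℝ t).2.1; unfold squash; linarith

lemma squash_lt_half (t : ℝ) : squash t < 1 / 2 := by
  have := (orderIsoIooNegOneOne ℝ t).2.2; unfold squash; linarith

lemma squash_mem_Ico (t : ℝ) : squash t ∈ Set.Ico (0 : ℝ) 1 :=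
  ⟨(squash_pos t).le, by linarith [squash_lt_half t]⟩

lemma one_sub_squash_mem_Ico (t : ℝ) : 1 - squash t ∈ Set.Ico (0 : ℝ) 1 :=
  ⟨by linarith [squash_lt_half t], by linarith [squash_pos t]⟩

/-- The second line is laid on the circle in reverse, so that disagreeing orders become
crossing chords. -/
noncomputable def toCircleRep (P : PermutationRep V G) : CircleRep V G where
  p v := (squash (P.a v) : Circ)
  q v := (1 - squash (P.b v) : ℝ)
  inj := by
    have hpq : ∀ s t, ((squash s : ℝ) : Circ) ≠ ((1 - squash t : ℝ) : Circ) := fun s t h => by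
      linarith [coe_injOn_Ico (squash_mem_Ico s) (one_sub_squash_mem_Ico t) h,
        squash_lt_half s, squash_lt_half t]
    rintro (u | u) (v | v) h
    · exact congrArg _ (P.a_injective (squash_strictMono.injective
        (coe_injOn_Ico (squash_mem_Ico _) (squash_mem_Ico _) h)))
    · exact (hpq _ _ h).elim
    · exact (hpq _ _ h.symm).elim
    · exact congrArg _ (P.b_injective (squash_strictMono.injective (sub_right_injective
        (coe_injOn_Ico (one_sub_squash_mem_Ico _) (one_sub_squash_mem_Ico _) h))))
  adj u v := by
    show _ ↔ _ ∧ Xor _ _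
    rw [P.adj, sbtw_coe_iff (squash_mem_Ico _) (squash_mem_Ico _) (one_sub_squash_mem_Ico _),
      sbtw_coe_iff (squash_mem_Ico _) (one_sub_squash_mem_Ico _) (one_sub_squash_mem_Ico _),
      ← squash_strictMono.lt_iff_lt (a := P.a v), ← squash_strictMono.lt_iff_lt (a := P.b v)]
    have := squash_lt_half (P.a u); have := squash_lt_half (P.a v)
    have := squash_lt_half (P.b u); have := squash_lt_half (P.b v)
    grind

end PermutationRep

/-- `sbtw` on `Fin N` is the cyclic order of `N` points around a circle. -/
def IsChordRep {V : Type} {N : ℕ} (r : V ⊕ V ≃ Fin N) (H : SimpleGraph V) : Prop :=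
  ∀ u v, H.Adj u v ↔ u ≠ v ∧
    Xor (sbtw (r (.inl v)) (r (.inl u)) (r (.inr v))) (sbtw (r (.inl v)) (r (.inr u)) (r (.inr v)))

lemma CircleRep.exists_isChordRep {V : Type} [Fintype V] {H : SimpleGraph V}
    (R : CircleRep V H) : ∃ r : V ⊕ V ≃ Fin (2 * Fintype.card V), IsChordRep r H := by
  obtain ⟨r, hr⟩ := exists_equiv_fin_sbtw_iff (N := 2 * Fintype.card V) R.inj (by simp [two_mul])
  refine ⟨r, fun u v => ?_⟩
  rw [R.adj u v, ← hr (.inl v) (.inl u) (.inr v), ← hr (.inl v) (.inr u) (.inr v)]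
  rfl

lemma rank_ne_of_ne {V : Type} {N : ℕ} (r : V ⊕ V ≃ Fin N) {u v : V} (huv : u ≠ v) :
    (r (.inl u) : ℕ) ≠ r (.inl v) ∧ (r (.inr u) : ℕ) ≠ r (.inr v) ∧
      (r (.inl u) : ℕ) ≠ r (.inr v) ∧ (r (.inr u) : ℕ) ≠ r (.inl v) := by
  refine ⟨?_, ?_, ?_, ?_⟩ <;> exact Fin.val_injective.ne (r.injective.ne (by simp [huv]))

namespace IsChordRep

variable {V : Type} {H : SimpleGraph V} {N : ℕ} {r : V ⊕ V ≃ Fin N}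

lemma end_mem_Ico_of_adj (hr : IsChordRep r H) {i j : ℕ} {u w : V} (huw : H.Adj u w)
    (hinl : (r (.inl u) : ℕ) ∈ Set.Ico i j) (hinr : (r (.inr u) : ℕ) ∈ Set.Ico i j) :
    (r (.inl w) : ℕ) ∈ Set.Ico i j ∨ (r (.inr w) : ℕ) ∈ Set.Ico i j := by
  obtain ⟨huw, hx⟩ := (hr u w).1 huw
  have := rank_ne_of_ne r huw
  simp only [Fin.sbtw_iff, Fin.lt_def, xor_def, Set.mem_Ico] at hx hinl hinr ⊢
  omega

/-- Cut at `i`, the circle becomes a line on which two chords with one end each in `[i, j)` cross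
iff their inner ends and their outer ends come in the same order, whence the sign in `b`. -/
noncomputable def toPermutationRep (hr : IsChordRep r H) (i j : ℕ)
    (hsplit : ∀ v, Xor ((r (.inl v) : ℕ) ∈ Set.Ico i j) ((r (.inr v) : ℕ) ∈ Set.Ico i j)) :
    PermutationRep V H :=
  let inside : V → V ⊕ V := fun v => if (r (.inl v) : ℕ) ∈ Set.Ico i j then .inl v else .inr v
  let outside : V → V ⊕ V := fun v => if (r (.inl v) : ℕ) ∈ Set.Ico i j then .inr v else .inl v
  let rotate : ℕ → ℕ := fun m => if m < i then m + N else m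
  { a := fun v => (r (inside v) : ℕ)
    b := fun v => -(rotate (r (outside v)) : ℝ)
    a_injective := fun u v h => by
      by_contra huv
      have := rank_ne_of_ne r huv
      simp only [inside, Nat.cast_inj] at h
      split_ifs at h <;> omega
    b_injective := fun u v h => by
      by_contra huv
      have := rank_ne_of_ne r huv
      simp only [outside, rotate, neg_inj, Nat.cast_inj] at h
      split_ifs at h <;> omega
    adj := fun u v => by
      rw [hr u v]
      refine and_congr_right fun huv => ?_
      have := rank_ne_of_ne r huv
      have := hsplit u
      have := hsplit v
      simp only [inside, outside, rotate, Fin.sbtw_iff, Fin.lt_def, xor_def, Set.mem_Ico,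
        neg_lt_neg_iff, Nat.cast_lt] at *
      split_ifs <;> omega }

end IsChordRep

theorem IsChordRep.exists_Ico_xor_of_cobipartite {V : Type} [Fintype V] {H : SimpleGraph V}
    {r : V ⊕ V ≃ Fin (2 * Fintype.card V)} (hr : IsChordRep r H) (A : Set V)
    (hA : ∀ u ∈ A, ∀ v ∈ A, u ≠ v → H.Adj u v) (hAc : ∀ u ∉ A, ∀ v ∉ A, u ≠ v → H.Adj u v) :
    ∃ i, ∀ v, Xor ((r (.inl v) : ℕ) ∈ Set.Ico i (i + Fintype.card V))
      ((r (.inr v) : ℕ) ∈ Set.Ico i (i + Fintype.card V)) := by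
  classical
  obtain ⟨i, hi, hwinA⟩ := exists_balanced_window r (Sum.elim (· ∈ A) (· ∈ A))
    (a := #{v | v ∈ A}) (by rw [card_filter_sum_type, two_mul]; rfl)
  set W : V ⊕ V → Prop := fun x => (r x : ℕ) ∈ Set.Ico i (i + Fintype.card V)
  have hwin : #{x | W x} = Fintype.card V :=
    (card_equiv r (by simp [W])).trans (card_filter_fin_Ico (i := i) (by omega))
  have hcountA : #{v | v ∈ A ∧ W (.inl v)} + #{v | v ∈ A ∧ W (.inr v)} = #{v | v ∈ A} := by
    rw [← hwinA, card_filter_sum_type]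
    rfl
  have hcountAc : #{v | v ∉ A ∧ W (.inl v)} + #{v | v ∉ A ∧ W (.inr v)} = #{v | v ∉ A} := by
    have hinl := card_filter_and_add_card_filter_and_not (· ∈ A) (fun v => W (.inl v))
    have hinr := card_filter_and_add_card_filter_and_not (· ∈ A) (fun v => W (.inr v))
    have hsplitA := card_filter_add_card_filter_not (s := (univ : Finset V)) (· ∈ A)
    rw [card_filter_sum_type] at hwin
    rw [card_univ] at hsplitA
    omega
  have hclique : ∀ C : V → Prop, (∀ u, C u → ∀ v, C v → u ≠ v → H.Adj u v) →
      ∀ u w, C u → C w → W (.inl u) → W (.inr u) → W (.inl w) ∨ W (.inr w) := by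
    intro C hC u w hu hw hinl hinr
    by_cases huw : u = w
    · exact .inl (huw ▸ hinl)
    · exact hr.end_mem_Ico_of_adj (hC u hu w hw huw) hinl hinr
  refine ⟨i, fun v => ?_⟩
  by_cases hv : v ∈ A
  · exact forall_xor_of_card_add_card_eq hcountA (hclique _ hA) v hv
  · exact forall_xor_of_card_add_card_eq hcountAc (hclique _ hAc) v hv

theorem CircleRep.nonempty_permutationRep_of_cobipartite {V : Type} [Fintype V]
    {H : SimpleGraph V} (R : CircleRep V H) (A : Set V)
    (hA : ∀ u ∈ A, ∀ v ∈ A, u ≠ v → H.Adj u v) (hAc : ∀ u ∉ A, ∀ v ∉ A, u ≠ v → H.Adj u v) :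
    Nonempty (PermutationRep V H) := by
  obtain ⟨r, hr⟩ := R.exists_isChordRep
  obtain ⟨i, hsplit⟩ := hr.exists_Ico_xor_of_cobipartite A hA hAc
  exact ⟨hr.toPermutationRep i _ hsplit⟩

/-- a bipartite graph whose complement is a circle graph is itself
a circle graph. -/
theorem stmt7 {V : Type} [Fintype V] (G : SimpleGraph V)
    (hbip : ∃ A : Set V, (∀ u ∈ A, ∀ v ∈ A, ¬ G.Adj u v) ∧
      (∀ u ∉ A, ∀ v ∉ A, ¬ G.Adj u v))
    (hcirc : Nonempty (CircleRep V Gᶜ)) :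
    Nonempty (CircleRep V G) := by
  obtain ⟨A, hA, hAc⟩ := hbip
  obtain ⟨R⟩ := hcirc
  obtain ⟨P⟩ := R.nonempty_permutationRep_of_cobipartite A
    (fun u hu v hv huv => (compl_adj G u v).2 ⟨huv, hA u hu v hv⟩)
    (fun u hu v hv huv => (compl_adj G u v).2 ⟨huv, hAc u hu v hv⟩)
  rw [← compl_compl G]
  exact ⟨P.compl.toCircleRep⟩
end

section
/- For any circle representation C, the polygon number of the representation satisfies ψ_r(C) ≥ max{ℓ : C contains an ℓ-independent set in series}. -/
open SimpleGraph

/-- Every open arc between two distinct points of the circle avoids any given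
finite set in at least one point (in fact the arc is infinite). -/
lemma arc_avoid (a b : Circ) (hab : a ≠ b) (E : Finset Circ) :
    ∃ t : Circ, sbtw a t b ∧ t ∉ E := by
  obtain ⟨a', rfl⟩ := QuotientAddGroup.mk_surjective a
  obtain ⟨b', rfl⟩ := QuotientAddGroup.mk_surjective b
  set m : ℝ := toIocMod (zero_lt_one) a' b' with hm
  have hmem := toIocMod_mem_Ioc (zero_lt_one) a' b'
  have ham : a' < m := hmem.1
  have hma : m ≤ a' + 1 := hmem.2
  have hcoe : (m : Circ) = (b' : Circ) := by
    obtain ⟨z, hz⟩ := ((toIocMod_eq_iff (zero_lt_one : (0:ℝ) < 1)).1 hm.symm).2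
    rw [hz, AddCircle.coe_add, AddCircle.coe_zsmul,
      (show ((1:ℝ) : Circ) = 0 from AddCircle.coe_period (1:ℝ)), smul_zero, add_zero]
  have hmlt : m < a' + 1 := by
    rcases lt_or_eq_of_le hma with h | h
    · exact h
    · exact absurd (by rw [← hcoe, h,
        (show ((a' + 1 : ℝ) : Circ) = ↑a' from AddCircle.coe_add_period 1 a')]) (Ne.symm hab)
  -- every real t ∈ (a', m) maps into the arc
  have harc : ∀ t ∈ Set.Ioo a' m, sbtw (a' : Circ) (t : Circ) (b' : Circ) := by
    intro t ht
    rw [sbtw_iff_btw_not_btw]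
    constructor
    · rw [QuotientAddGroup.btw_coe_iff]
      have : toIcoMod (zero_lt_one) a' t = t :=
        (toIcoMod_eq_self _).2 ⟨ht.1.le, lt_of_lt_of_le ht.2 hma⟩
      rw [this]
      exact ht.2.le
    · rw [← hcoe, QuotientAddGroup.btw_coe_iff]
      have h1 : toIcoMod (zero_lt_one) m t = t + 1 := by
        rw [toIcoMod_eq_iff]
        refine ⟨⟨by linarith [ht.1], by linarith [ht.2]⟩, -1, by simp⟩
      have h2 : toIocMod (zero_lt_one) m a' = a' + 1 := by
        rw [toIocMod_eq_iff]
        refine ⟨⟨by linarith, by linarith⟩, -1, by simp⟩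
      rw [h1, h2, not_le]
      linarith [ht.1]
  -- the arc is infinite
  have hinf : Set.Infinite {t : Circ | sbtw (a' : Circ) t (b' : Circ)} := by
    have hIoo : (Set.Ioo a' m).Infinite := Set.Ioo_infinite ham
    have hinj : Set.InjOn (fun t : ℝ => (t : Circ)) (Set.Ioo a' m) := by
      intro s hs t ht hst
      exact (AddCircle.coe_eq_coe_iff_of_mem_Ico (p := (1:ℝ)) (a := a')
        ⟨hs.1.le, lt_of_lt_of_le hs.2 hma⟩ ⟨ht.1.le, lt_of_lt_of_le ht.2 hma⟩).1 hst
    have hsub : (fun t : ℝ => (t : Circ)) '' Set.Ioo a' m ⊆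
        {t : Circ | sbtw (a' : Circ) t (b' : Circ)} := by
      rintro x ⟨t, ht, rfl⟩
      exact harc t ht
    exact Set.Infinite.mono hsub (hIoo.image hinj)
  obtain ⟨t, ht, htE⟩ := (hinf.diff E.finite_toSet).nonempty
  exact ⟨t, ht, htE⟩

/-- `ψ_r(C)` is at least the size of any independent set in series in `C`. -/
theorem stmt8 {V : Type} [Fintype V] (G : SimpleGraph V) (R : CircleRep V G)
    (l : ℕ) (h : ∃ c : Fin l → V, R.SeriesIndep c) :
    l ≤ R.polyNum := by
  classical
  obtain ⟨c, hcinj, x, hx, hord⟩ := h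
  have hpq : ∀ v : V, R.p v ≠ R.q v := by
    intro v hv
    have := R.inj (a₁ := Sum.inl v) (a₂ := Sum.inr v) (by simpa using hv)
    simp at this
  rw [CircleRep.polyNum]
  apply le_csInf
  · -- the set of achievable corner numbers is nonempty
    set E : Finset Circ := Finset.image R.p Finset.univ ∪ Finset.image R.q Finset.univ with hE
    have key : ∀ vb : V × Bool, ∃ s : Circ, s ∈ R.ArcSet vb.1 vb.2 ∧ s ∉ E := by
      rintro ⟨v, b⟩
      cases b with
      | false =>
        obtain ⟨s, hs, hsE⟩ := arc_avoid (R.q v) (R.p v) (Ne.symm (hpq v)) E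
        exact ⟨s, by simp [CircleRep.ArcSet, hs], hsE⟩
      | true =>
        obtain ⟨s, hs, hsE⟩ := arc_avoid (R.p v) (R.q v) (hpq v) E
        exact ⟨s, by simp [CircleRep.ArcSet, hs], hsE⟩
    choose t ht htE using key
    refine ⟨(Finset.image t Finset.univ).card, Finset.image t Finset.univ, rfl, ?_, ?_⟩
    · intro s hs v
      obtain ⟨vb, _, rfl⟩ := Finset.mem_image.1 hs
      constructor
      · intro heq
        exact htE vb (by rw [heq]; simp [hE])
      · intro heq
        exact htE vb (by rw [heq]; simp [hE])
    · intro v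
      exact ⟨⟨t (v, true), Finset.mem_image_of_mem _ (Finset.mem_univ _), ht (v, true)⟩,
        ⟨t (v, false), Finset.mem_image_of_mem _ (Finset.mem_univ _), ht (v, false)⟩⟩
  · -- every achievable corner number is at least l
    rintro k ⟨T, rfl, hTav, hTsat⟩
    have key : ∀ i : Fin l, ∃ t a b : Circ, t ∈ T ∧
        a ∈ ({R.p (c i), R.q (c i)} : Set Circ) ∧
        b ∈ ({R.p (c i), R.q (c i)} : Set Circ) ∧
        sbtw a t b ∧ sbtw b x a := by
      intro i
      obtain ⟨⟨t₁, ht₁T, ht₁⟩, ⟨t₂, ht₂T, ht₂⟩⟩ := hTsat (c i)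
      have ht₁' : sbtw (R.p (c i)) t₁ (R.q (c i)) := by
        simpa [CircleRep.ArcSet] using ht₁
      have ht₂' : sbtw (R.q (c i)) t₂ (R.p (c i)) := by
        simpa [CircleRep.ArcSet] using ht₂
      by_cases hxc : sbtw (R.q (c i)) x (R.p (c i))
      · exact ⟨t₁, _, _, ht₁T, Or.inl rfl, Or.inr rfl, ht₁', hxc⟩
      · have hb : btw (R.p (c i)) x (R.q (c i)) := by
          rw [btw_iff_not_sbtw]; exact hxc
        have hs : sbtw (R.p (c i)) x (R.q (c i)) := by
          refine sbtw_of_btw_not_btw hb ?_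
          intro hb2
          rcases hb.antisymm hb2 with hh | hh | hh
          · exact (hx i).1 hh.symm
          · exact (hx i).2 hh
          · exact hpq (c i) hh.symm
        exact ⟨t₂, _, _, ht₂T, Or.inr rfl, Or.inl rfl, ht₂', hs⟩
    choose t a b htT ha hb htab hbxa using key
    have hlt : ∀ i j : Fin l, i < j → t i ≠ t j := by
      intro i j hij heq
      have h1 : sbtw x (a i) (b i) := sbtw_cyclic_left (hbxa i)
      have h2 : sbtw x (t i) (b i) := h1.trans_left (htab i)
      have h3 : sbtw x (b i) (a j) := hord i j hij (b i) (hb i) (a j) (ha j)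
      have h4 : sbtw x (t i) (a j) := sbtw_trans_right h2 h3
      have h5 : sbtw (a j) (b j) x := sbtw_cyclic_left (sbtw_cyclic_left (hbxa j))
      have h6 : sbtw (a j) (t j) x := sbtw_trans_right (htab j) h5
      have h7 : sbtw x (a j) (t j) := sbtw_cyclic_left (sbtw_cyclic_left h6)
      rw [heq] at h4
      exact sbtw_irrefl_right (sbtw_trans_right h4 h7)
    have hinj : Set.InjOn t (Finset.univ : Finset (Fin l)) := by
      intro i _ j _ hij
      by_contra hne
      rcases lt_or_gt_of_ne hne with hh | hh
      · exact hlt i j hh hij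
      · exact hlt j i hh hij.symm
    calc l = (Finset.univ : Finset (Fin l)).card := by simp
    _ ≤ T.card := Finset.card_le_card_of_injOn t (fun i _ => htT i) hinj
end

section
/- Any graph on four or more vertices that has a cut vertex also has a split. -/
open SimpleGraph

lemma split_of_closed {V : Type} [Fintype V] (G : SimpleGraph V) (v : V)
    (S : Set V)
    (hclosed : ∀ y ∈ S, ∀ x : V, G.Adj x y → x = v ∨ x ∈ S)
    (h1 : 1 < S.ncard) (h2 : 1 < Sᶜ.ncard) :
    IsSplit G Sᶜ S := by
  refine ⟨Set.compl_union_self S, disjoint_compl_left, h2, h1, ?_⟩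
  intro x hx y hy
  constructor
  · intro h; exact ⟨⟨y, hy, h⟩, ⟨x, hx, h⟩⟩
  · rintro ⟨⟨y', hy', hxy'⟩, ⟨x', hx', hx'y⟩⟩
    have hxv : x = v := (hclosed y' hy' x hxy').resolve_right hx
    have hx'v : x' = v := (hclosed y hy x' hx'y).resolve_right hx'
    rw [hxv, ← hx'v]; exact hx'y

/-- any graph on four or more vertices that has a cut vertex also
has a split. -/
theorem stmt15 {V : Type} [Fintype V] (G : SimpleGraph V)
    (h4 : 4 ≤ Fintype.card V) (hconn : G.Connected) (v : V)
    (hcut : ¬ (G.induce {w : V | w ≠ v}).Connected) :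
    ∃ V1 V2 : Set V, IsSplit G V1 V2 := by
  classical
  set Vs : Set V := {w : V | w ≠ v} with hVsdef
  have hne : Nonempty ↥Vs := by
    obtain ⟨w, hw⟩ : ∃ w : V, w ≠ v := by
      by_contra h; push_neg at h
      have : Fintype.card V ≤ 1 :=
        Fintype.card_le_one_iff.mpr (fun a b => (h a).trans (h b).symm)
      omega
    exact ⟨⟨w, hw⟩⟩
  have hnp : ¬ (G.induce Vs).Preconnected := fun hp => hcut ⟨hp⟩
  simp only [SimpleGraph.Preconnected] at hnp
  push_neg at hnp
  obtain ⟨a, b, hab⟩ := hnp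
  set R : ↥Vs → Set V := fun c => {w | ∃ h : w ≠ v, (G.induce Vs).Reachable ⟨w, h⟩ c}
    with hRdef
  have hmem : ∀ c : ↥Vs, (c : V) ∈ R c := by
    rintro ⟨c, hc⟩; exact ⟨hc, Reachable.refl _⟩
  have hclosed : ∀ c : ↥Vs, ∀ y ∈ R c, ∀ x : V, G.Adj x y → x = v ∨ x ∈ R c := by
    rintro c y ⟨hy, hr⟩ x hadj
    by_cases hx : x = v
    · left; exact hx
    · right
      refine ⟨hx, Reachable.trans ?_ hr⟩
      have : (G.induce Vs).Adj ⟨x, hx⟩ ⟨y, hy⟩ := hadj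
      exact this.reachable
  have hba : (b : V) ∉ R a := by
    rintro ⟨h, hr⟩
    exact hab ((by cases b; exact hr : (G.induce Vs).Reachable b a).symm)
  have hab' : (a : V) ∉ R b := by
    rintro ⟨h, hr⟩
    exact hab (by cases a; exact hr)
  have hvR : ∀ c : ↥Vs, v ∉ R c := by rintro c ⟨h, -⟩; exact h rfl
  by_cases hA : 1 < (R a).ncard
  · refine ⟨(R a)ᶜ, R a, split_of_closed G v _ (hclosed a) hA ?_⟩
    rw [Set.one_lt_ncard (Set.toFinite _)]
    refine ⟨v, hvR a, b, hba, fun h => ?_⟩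
    exact b.2 h.symm
  by_cases hB : 1 < (R b).ncard
  · refine ⟨(R b)ᶜ, R b, split_of_closed G v _ (hclosed b) hB ?_⟩
    rw [Set.one_lt_ncard (Set.toFinite _)]
    refine ⟨v, hvR b, a, hab', fun h => ?_⟩
    exact a.2 h.symm
  -- both singletons
  have hRa : ∀ w ∈ R a, w = (a : V) := by
    intro w hw
    by_contra hne'
    exact hA ((Set.one_lt_ncard (Set.toFinite _)).mpr ⟨w, hw, a, hmem a, hne'⟩)
  have hRb : ∀ w ∈ R b, w = (b : V) := by
    intro w hw
    by_contra hne'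
    exact hB ((Set.one_lt_ncard (Set.toFinite _)).mpr ⟨w, hw, b, hmem b, hne'⟩)
  have hanb : (a : V) ≠ (b : V) := fun h => hba (h ▸ hmem a)
  refine ⟨(R a ∪ R b)ᶜ, R a ∪ R b, split_of_closed G v _ ?_ ?_ ?_⟩
  · rintro y (hy | hy) x hadj
    · rcases hclosed a y hy x hadj with h | h
      · exact Or.inl h
      · exact Or.inr (Or.inl h)
    · rcases hclosed b y hy x hadj with h | h
      · exact Or.inl h
      · exact Or.inr (Or.inr h)
  · rw [Set.one_lt_ncard (Set.toFinite _)]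
    exact ⟨a, Or.inl (hmem a), b, Or.inr (hmem b), hanb⟩
  · rw [Set.one_lt_ncard (Set.toFinite _)]
    obtain ⟨w, hw⟩ : ∃ w : V, w ∉ ({v, (a : V), (b : V)} : Finset V) := by
      by_contra h; push_neg at h
      have hsub : (Finset.univ : Finset V) ⊆ {v, (a : V), (b : V)} :=
        fun x _ => h x
      have h3 : ({v, (a : V), (b : V)} : Finset V).card ≤ 3 := by
        apply (Finset.card_insert_le _ _).trans
        apply Nat.succ_le_succ
        apply (Finset.card_insert_le _ _).trans
        simp
      have := (Finset.card_le_card hsub).trans h3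
      rw [Finset.card_univ] at this
      omega
    simp only [Finset.mem_insert, Finset.mem_singleton] at hw
    push_neg at hw
    refine ⟨v, ?_, w, ?_, fun h => hw.1 h.symm⟩
    · rintro (h | h)
      · exact hvR a h
      · exact hvR b h
    · rintro (h | h)
      · exact hw.2.1 (hRa w h)
      · exact hw.2.2 (hRb w h)
end
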